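/- arXiv:1506.09211 — 6 statements merged into one kernel-verified Lean document; each statement's English description precedes it below -/
import Mathlib

section
/- Let s, t, B be real numbers with 0 < s ≤ 1, t ≥ 0, B > 0, and let (A_n) and (b_n) be sequences of real numbers. Define b₊ = 0 if s < 1 and b₊ = t if s = 1, and assume c = lim_{n→∞} A_n − b₊ exists, is finite, and c > 0. If there is n₀ such that for all n ≥ n₀ one has b_{n+1} ≤ b_n (1 − A_n/n^s) + B/n^{s+t}, then limsup_{n→∞} n^t · b_n ≤ B/c. -/
/-!
Writing `x n = n ^ t * b n` and `p n = (1 + 1/n) ^ t`, so that `(n + 1) ^ t = p n * n ^ t`, the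
recursion becomes `x (n+1) ≤ r n * x n + p n * B / n ^ s` with `r n = p n * (1 - A n / n ^ s)`.
Since `n ^ s * (p n - 1) → b₊` (the derivative of `x ↦ x ^ t` at `1` when `s = 1`), for every
`γ < c` eventually `r n ≤ 1 - γ / n ^ s`; if moreover `B < K * γ` then `x n - K` is eventually
multiplied by at most `1 - γ / n ^ s` at each step. As `∑ n ^ (-s)` diverges for `s ≤ 1`, the
positive part of `x n - K` tends to `0`, hence `limsup x ≤ K` for every `K > B / c`.
-/

open Filter Topology Finset

lemma limsup_le_of_forall_gt_eventually_le {ι : Type*} {f : Filter ι} {u : ι → ℝ} {a : ℝ}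
    (ha : 0 ≤ a) (h : ∀ L > a, ∀ᶠ i in f, u i ≤ L) : limsup u f ≤ a := by
  rw [limsup_eq]
  -- The set is unbounded below exactly when `u` tends to `-∞` along `f`; then `limsup` is junk `0`.
  by_cases hbdd : BddBelow {L | ∀ᶠ i in f, u i ≤ L}
  · exact le_of_forall_gt_imp_ge_of_dense fun L hL => csInf_le hbdd (h L hL)
  · rw [Real.sInf_of_not_bddBelow hbdd]
    exact ha

lemma le_mul_exp_neg_sum_Ico {y r ε : ℕ → ℝ} {n₁ : ℕ}
    (h : ∀ n ≥ n₁, 0 ≤ r n ∧ r n ≤ 1 - ε n ∧ y (n + 1) ≤ r n * y n) {n : ℕ} (hn : n₁ ≤ n) :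
    y n ≤ max (y n₁) 0 * Real.exp (-∑ i ∈ Ico n₁ n, ε i) := by
  induction n, hn using Nat.le_induction with
  | base => simp
  | succ n hn ih =>
    obtain ⟨hr0, hr1, hy⟩ := h n hn
    set M := max (y n₁) 0 * Real.exp (-∑ i ∈ Ico n₁ n, ε i)
    have hM : 0 ≤ M := by positivity
    calc y (n + 1) ≤ r n * y n := hy
      _ ≤ r n * M := mul_le_mul_of_nonneg_left ih hr0
      _ ≤ Real.exp (-ε n) * M :=
        mul_le_mul_of_nonneg_right (hr1.trans (by linarith [Real.add_one_le_exp (-ε n)])) hM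
      _ = _ := by rw [sum_Ico_succ_top hn, neg_add, Real.exp_add]; ring

lemma eventually_lt_of_le_mul_of_tendsto_sum {y r ε : ℕ → ℝ}
    (hε : Tendsto (fun n => ∑ i ∈ range n, ε i) atTop atTop)
    (h : ∀ᶠ n in atTop, 0 ≤ r n ∧ r n ≤ 1 - ε n ∧ y (n + 1) ≤ r n * y n)
    {δ : ℝ} (hδ : 0 < δ) : ∀ᶠ n in atTop, y n < δ := by
  obtain ⟨n₁, hn₁⟩ := eventually_atTop.1 h
  have hsum : Tendsto (fun n => ∑ i ∈ Ico n₁ n, ε i) atTop atTop := by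
    refine (tendsto_atTop_add_const_right _ (-∑ i ∈ range n₁, ε i) hε).congr' ?_
    filter_upwards [eventually_ge_atTop n₁] with n hn
    rw [sum_Ico_eq_sub _ hn, sub_eq_add_neg]
  have hbound : Tendsto (fun n => max (y n₁) 0 * Real.exp (-∑ i ∈ Ico n₁ n, ε i))
      atTop (𝓝 0) := by
    simpa using (Real.tendsto_exp_atBot.comp
      (tendsto_neg_atTop_atBot.comp hsum)).const_mul (max (y n₁) 0)
  filter_upwards [hbound.eventually_lt_const hδ, eventually_ge_atTop n₁] with n hlt hn
  exact (le_mul_exp_neg_sum_Ico hn₁ hn).trans_lt hlt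

lemma tendsto_sum_range_div_natCast_rpow_atTop {γ s : ℝ} (hγ : 0 < γ) (hs : s ≤ 1) :
    Tendsto (fun n => ∑ i ∈ range n, γ / (i : ℝ) ^ s) atTop atTop := by
  refine (not_summable_iff_tendsto_nat_atTop_of_nonneg fun i => by positivity).1 fun hsum => ?_
  simp_rw [div_eq_mul_one_div γ] at hsum
  exact absurd (Real.summable_one_div_nat_rpow.1 ((summable_mul_left_iff hγ.ne').1 hsum))
    hs.not_gt

lemma tendsto_natCast_mul_one_add_inv_rpow_sub_one (t : ℝ) :
    Tendsto (fun n : ℕ => (n : ℝ) * ((1 + (n : ℝ)⁻¹) ^ t - 1)) atTop (𝓝 t) := by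
  have hslope := (Real.hasDerivAt_rpow_const (x := 1) (p := t)
    (Or.inl one_ne_zero)).tendsto_slope_zero_right
  simpa [Function.comp_def] using
    hslope.comp (tendsto_inv_atTop_nhdsGT_zero.comp tendsto_natCast_atTop_atTop)

lemma tendsto_natCast_rpow_mul_one_add_inv_rpow_sub_one {s : ℝ} (hs : s ≤ 1) (t : ℝ) :
    Tendsto (fun n : ℕ => (n : ℝ) ^ s * ((1 + (n : ℝ)⁻¹) ^ t - 1)) atTop
      (𝓝 (if s = 1 then t else 0)) := by
  have hpow : Tendsto (fun n : ℕ => (n : ℝ) ^ (s - 1)) atTop (𝓝 (if s = 1 then 1 else 0)) := by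
    rcases hs.lt_or_eq with hs | rfl
    · simpa [hs.ne, neg_sub, Function.comp_def] using
        (tendsto_rpow_neg_atTop (by linarith : 0 < 1 - s)).comp tendsto_natCast_atTop_atTop
    · simp
  have hlim := hpow.mul (tendsto_natCast_mul_one_add_inv_rpow_sub_one t)
  rw [show ((if s = 1 then 1 else 0) * t) = if s = 1 then t else 0 by split_ifs <;> simp] at hlim
  refine hlim.congr' ?_
  filter_upwards [eventually_ne_atTop 0] with n hn
  rw [Real.rpow_sub_one (Nat.cast_ne_zero.2 hn)]
  field_simp

lemma tendsto_one_add_inv_natCast_rpow (t : ℝ) :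
    Tendsto (fun n : ℕ => (1 + (n : ℝ)⁻¹) ^ t) atTop (𝓝 1) := by
  simpa using ((tendsto_inv_atTop_zero.comp tendsto_natCast_atTop_atTop).const_add 1).rpow_const
    (Or.inl (by norm_num))
lemma sub_le_mul_sub_of_rescaled_step {s t B K γ a b b' : ℝ} {n : ℕ} (hn : n ≠ 0) (hK : 0 ≤ K)
    (ha : a / (n : ℝ) ^ s ≤ 1)
    (hpa : (n : ℝ) ^ s * ((1 + (n : ℝ)⁻¹) ^ t - 1) ≤ (1 + (n : ℝ)⁻¹) ^ t * a - γ)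
    (hpB : (1 + (n : ℝ)⁻¹) ^ t * B ≤ K * γ)
    (hrec : b' ≤ b * (1 - a / (n : ℝ) ^ s) + B / (n : ℝ) ^ (s + t)) :
    0 ≤ (1 + (n : ℝ)⁻¹) ^ t * (1 - a / (n : ℝ) ^ s) ∧
      (1 + (n : ℝ)⁻¹) ^ t * (1 - a / (n : ℝ) ^ s) ≤ 1 - γ / (n : ℝ) ^ s ∧
      ((n : ℝ) + 1) ^ t * b' - K ≤
        (1 + (n : ℝ)⁻¹) ^ t * (1 - a / (n : ℝ) ^ s) * ((n : ℝ) ^ t * b - K) := by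
  have hn0 : (0 : ℝ) < n := Nat.cast_pos.2 (Nat.pos_of_ne_zero hn)
  rw [Real.rpow_add hn0] at hrec
  set p := (1 + (n : ℝ)⁻¹) ^ t
  set N := (n : ℝ) ^ s
  set r := p * (1 - a / N) with hr_def
  have hN : 0 < N := by positivity
  have hp : 0 < p := by positivity
  have hscale : ((n : ℝ) + 1) ^ t = p * (n : ℝ) ^ t := by
    rw [← Real.mul_rpow (by positivity) hn0.le]
    field_simp
  have hrescaled : ((n : ℝ) + 1) ^ t * b' ≤ r * ((n : ℝ) ^ t * b) + p * B / N := by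
    calc ((n : ℝ) + 1) ^ t * b' ≤ ((n : ℝ) + 1) ^ t * (b * (1 - a / N) + B / (N * (n : ℝ) ^ t)) :=
          mul_le_mul_of_nonneg_left hrec (by positivity)
      _ = r * ((n : ℝ) ^ t * b) + p * B / N := by
          rw [hscale, hr_def]
          field_simp
  have hr : r ≤ 1 - γ / N := by
    have : r - (1 - γ / N) = (N * (p - 1) - (p * a - γ)) / N := by
      rw [hr_def]
      field_simp
      ring
    linarith [div_nonpos_of_nonpos_of_nonneg (sub_nonpos.2 hpa) hN.le]
  have hforcing : p * B / N ≤ K * (1 - r) := by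
    calc p * B / N ≤ K * γ / N := by gcongr
      _ = K * (γ / N) := mul_div_assoc _ _ _
      _ ≤ K * (1 - r) := by gcongr; linarith
  refine ⟨mul_nonneg hp.le (by linarith), hr, ?_⟩
  linarith

lemma eventually_natCast_rpow_mul_lt {s t B c : ℝ} (hs0 : 0 < s) (hs1 : s ≤ 1) (hB : 0 < B)
    {A b : ℕ → ℝ}
    (hc : Tendsto (fun n => A n - (if s = 1 then t else 0)) atTop (𝓝 c)) (hcpos : 0 < c)
    (hrec : ∀ᶠ n : ℕ in atTop,
      b (n + 1) ≤ b n * (1 - A n / (n : ℝ) ^ s) + B / (n : ℝ) ^ (s + t))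
    {K δ : ℝ} (hK : B / c < K) (hδ : 0 < δ) :
    ∀ᶠ n : ℕ in atTop, (n : ℝ) ^ t * b n < K + δ := by
  have hK0 : 0 < K := (div_pos hB hcpos).trans hK
  obtain ⟨γ, hγK, hγc⟩ : ∃ γ, B / K < γ ∧ γ < c :=
    exists_between ((div_lt_comm₀ hcpos hK0).1 hK)
  have hγ : 0 < γ := (div_pos hB hK0).trans hγK
  have hA : Tendsto A atTop (𝓝 (c + if s = 1 then t else 0)) := by
    simpa using hc.add_const (if s = 1 then t else 0)
  have hAs : Tendsto (fun n : ℕ => A n / (n : ℝ) ^ s) atTop (𝓝 0) := by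
    simpa using hA.div_atTop ((tendsto_rpow_atTop hs0).comp tendsto_natCast_atTop_atTop)
  have hp := tendsto_one_add_inv_natCast_rpow t
  have hpa : ∀ᶠ n : ℕ in atTop, (n : ℝ) ^ s * ((1 + (n : ℝ)⁻¹) ^ t - 1) ≤
      (1 + (n : ℝ)⁻¹) ^ t * A n - γ := by
    refine ((tendsto_natCast_rpow_mul_one_add_inv_rpow_sub_one hs1 t).eventually_lt
      ((hp.mul hA).sub_const γ) ?_).mono fun n => le_of_lt
    linarith
  have hpB : ∀ᶠ n : ℕ in atTop, (1 + (n : ℝ)⁻¹) ^ t * B ≤ K * γ := by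
    refine ((hp.mul_const B).eventually_lt_const ?_).mono fun n => le_of_lt
    rwa [one_mul, ← div_lt_iff₀' hK0]
  have hstep : ∀ᶠ n : ℕ in atTop,
      0 ≤ (1 + (n : ℝ)⁻¹) ^ t * (1 - A n / (n : ℝ) ^ s) ∧
      (1 + (n : ℝ)⁻¹) ^ t * (1 - A n / (n : ℝ) ^ s) ≤ 1 - γ / (n : ℝ) ^ s ∧
      ((n + 1 : ℕ) : ℝ) ^ t * b (n + 1) - K ≤
        (1 + (n : ℝ)⁻¹) ^ t * (1 - A n / (n : ℝ) ^ s) * ((n : ℝ) ^ t * b n - K) := by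
    filter_upwards [eventually_ne_atTop 0, hAs.eventually_lt_const one_pos, hpa, hpB, hrec]
      with n hn ha hpa hpB hrec
    push_cast
    exact sub_le_mul_sub_of_rescaled_step hn hK0.le ha.le hpa hpB hrec
  filter_upwards [eventually_lt_of_le_mul_of_tendsto_sum (y := fun n => (n : ℝ) ^ t * b n - K)
    (tendsto_sum_range_div_natCast_rpow_atTop hγ hs1) hstep hδ] with n hn
  linarith

theorem chung_lemma_limsup_general (s t B c : ℝ) (hs0 : 0 < s) (hs1 : s ≤ 1)
    (hB : 0 < B) (A b : ℕ → ℝ)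
    (hc : Filter.Tendsto (fun n => A n - (if s = 1 then t else 0))
      Filter.atTop (nhds c))
    (hcpos : 0 < c)
    (hrec : ∃ n₀ : ℕ, ∀ n ≥ n₀,
      b (n + 1) ≤ b n * (1 - A n / (n : ℝ) ^ s) + B / (n : ℝ) ^ (s + t)) :
    Filter.limsup (fun n : ℕ => (n : ℝ) ^ t * b n) Filter.atTop ≤ B / c := by
  refine limsup_le_of_forall_gt_eventually_le (div_pos hB hcpos).le fun L hL => ?_
  have hK : B / c < (B / c + L) / 2 := by linarith
  filter_upwards [eventually_natCast_rpow_mul_lt hs0 hs1 hB hc hcpos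
    (eventually_atTop.2 hrec) hK (by linarith : 0 < (L - B / c) / 2)] with n hn
  linarith

/-- Chung's lemma (Fabian's formulation), upper-bound version:
if `b_{n+1} ≤ b_n (1 - A_n / n^s) + B / n^{s+t}` eventually, with
`A_n - b₊ → c > 0` (where `b₊ = t` if `s = 1` and `b₊ = 0` otherwise),
then `limsup n^t b_n ≤ B / c`. -/
theorem chung_lemma_limsup (s t B c : ℝ) (hs0 : 0 < s) (hs1 : s ≤ 1)
    (ht : 0 ≤ t) (hB : 0 < B) (A b : ℕ → ℝ)
    (hc : Filter.Tendsto (fun n => A n - (if s = 1 then t else 0))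
      Filter.atTop (nhds c))
    (hcpos : 0 < c)
    (hrec : ∃ n₀ : ℕ, ∀ n ≥ n₀,
      b (n + 1) ≤ b n * (1 - A n / (n : ℝ) ^ s) + B / (n : ℝ) ^ (s + t)) :
    Filter.limsup (fun n : ℕ => (n : ℝ) ^ t * b n) Filter.atTop ≤ B / c :=
  chung_lemma_limsup_general s t B c hs0 hs1 hB A b hc hcpos hrec
end

section
/- Fix n and 0 < ε < 1. Under the KW one-step setup, with b > 0, the following one-step mean-square recursion holds: E[(θ_{n+1} − θ*)²] ≤ E[(θ_n − θ*)²]·(1 − (2 − ε)K₁ a_n + 2K₂² a_n²) + 2b² a_n² δ_n^{2β} + c a_n² δ_n^γ + (4b²/(K₁ ε)) a_n δ_n^{2β}. -/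
/-!
Write `X = θₙ - θ*`, `m = E[hₙ | 𝓕]` and `B = b δₙ^β`. Since `X` is `𝓕`-measurable, the
conditional bias–variance decomposition gives
`E (X - aₙ hₙ)² = E (X - aₙ m)² + aₙ² E Var[hₙ | 𝓕]`,
and the second term is at most `aₙ² c δₙ^γ`. Pointwise `m = J'(θₙ) + Δₙ`; the coercivity
`K₁ X² ≤ X J'(θₙ)`, Young's inequality `2 |X| B ≤ ε K₁ X² + B² / (ε K₁)` for the bias, and
`(J' + Δ)² ≤ 2 K₂² X² + 2 B²` bound `(X - aₙ m)²` by
`X² (1 - (2 - ε) K₁ aₙ + 2 K₂² aₙ²) + 2 aₙ² B² + aₙ B² / (K₁ ε)`.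
-/

open MeasureTheory Filter ProbabilityTheory

lemma two_mul_abs_mul_le_mul_sq_add_sq_div {x B t : ℝ} (ht : 0 < t) :
    2 * |x| * B ≤ t * x ^ 2 + B ^ 2 / t := by
  have hgap : t * x ^ 2 + B ^ 2 / t - 2 * |x| * B = (t * |x| - B) ^ 2 / t := by
    field_simp
    rw [← sq_abs x]
    ring
  nlinarith [div_nonneg (sq_nonneg (t * |x| - B)) ht.le]

lemma mul_sq_sub_le_two_mul_mul_add {x j d K B t : ℝ} (ht : 0 < t)
    (hj : K * x ^ 2 ≤ x * j) (hd : |d| ≤ B) :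
    (2 * K - t) * x ^ 2 - B ^ 2 / t ≤ 2 * x * (j + d) := by
  have hxd : -(|x| * B) ≤ x * d := by
    have := mul_le_mul_of_nonneg_left hd (abs_nonneg x)
    rw [← abs_mul] at this
    linarith [neg_abs_le (x * d)]
  nlinarith [two_mul_abs_mul_le_mul_sq_add_sq_div (x := x) (B := B) ht]

lemma sq_add_le_of_abs_le {x j d K B : ℝ} (hj : |j| ≤ K * |x|) (hd : |d| ≤ B) :
    (j + d) ^ 2 ≤ 2 * K ^ 2 * x ^ 2 + 2 * B ^ 2 := by
  have hj2 : j ^ 2 ≤ K ^ 2 * x ^ 2 := by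
    simpa [sq_abs, mul_pow] using pow_le_pow_left₀ (abs_nonneg j) hj 2
  have hd2 : d ^ 2 ≤ B ^ 2 := by
    simpa [sq_abs] using pow_le_pow_left₀ (abs_nonneg d) hd 2
  nlinarith [sq_nonneg (j - d)]

lemma sq_sub_mul_add_le_of_coercive {x j d a K₁ K₂ B ε : ℝ}
    (ha : 0 ≤ a) (hK₁ : 0 < K₁) (hε : 0 < ε)
    (hlower : K₁ * x ^ 2 ≤ x * j) (hupper : |j| ≤ K₂ * |x|) (hd : |d| ≤ B) :
    (x - a * (j + d)) ^ 2
      ≤ x ^ 2 * (1 - (2 - ε) * K₁ * a + 2 * K₂ ^ 2 * a ^ 2) + 2 * a ^ 2 * B ^ 2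
        + a * (B ^ 2 / (K₁ * ε)) := by
  have hdrift := mul_sq_sub_le_two_mul_mul_add (mul_pos hK₁ hε) hlower hd
  have hsq := sq_add_le_of_abs_le hupper hd
  nlinarith [mul_le_mul_of_nonneg_left hdrift ha, mul_le_mul_of_nonneg_left hsq (sq_nonneg a)]

section

variable {Ω : Type*} {m m₀ : MeasurableSpace Ω} {μ : Measure[m₀] Ω}

lemma integral_sub_const_mul_sq {f g : Ω → ℝ} (hf : MemLp f 2 μ) (hg : MemLp g 2 μ) (a : ℝ) :
    ∫ ω, (f ω - a * g ω) ^ 2 ∂μ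
      = ∫ ω, f ω ^ 2 ∂μ - 2 * a * ∫ ω, f ω * g ω ∂μ + a ^ 2 * ∫ ω, g ω ^ 2 ∂μ := by
  have hfg : Integrable (fun ω => 2 * a * (f ω * g ω)) μ := (hf.integrable_mul hg).const_mul _
  have hf2 : Integrable (fun ω => f ω ^ 2 - 2 * a * (f ω * g ω)) μ := hf.integrable_sq.sub hfg
  have hg2 : Integrable (fun ω => a ^ 2 * g ω ^ 2) μ := hg.integrable_sq.const_mul _
  calc ∫ ω, (f ω - a * g ω) ^ 2 ∂μ
      = ∫ ω, ((f ω ^ 2 - 2 * a * (f ω * g ω)) + a ^ 2 * g ω ^ 2) ∂μ := by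
        congr with ω
        ring
    _ = _ := by
        rw [integral_add hf2 hg2, integral_sub hf.integrable_sq hfg, integral_const_mul,
          integral_const_mul]

lemma integral_mul_condExp_of_stronglyMeasurable_left (hm : m ≤ m₀) [SigmaFinite (μ.trim hm)]
    {f g : Ω → ℝ} (hf : StronglyMeasurable[m] f) (hfg : Integrable (f * g) μ)
    (hg : Integrable g μ) :
    ∫ ω, f ω * (μ[g | m]) ω ∂μ = ∫ ω, f ω * g ω ∂μ :=
  (integral_congr_ae (condExp_mul_of_stronglyMeasurable_left hf hfg hg).symm).trans
    (integral_condExp hm)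

lemma integral_condVar_add_integral_sq_condExp (hm : m ≤ m₀) [IsFiniteMeasure μ]
    {X : Ω → ℝ} (hX : MemLp X 2 μ) :
    ∫ ω, (Var[X; μ | m]) ω ∂μ + ∫ ω, (μ[X | m]) ω ^ 2 ∂μ = ∫ ω, X ω ^ 2 ∂μ := by
  rw [integral_congr_ae (condVar_ae_eq_condExp_sq_sub_sq_condExp hm hX)]
  simp only [Pi.sub_apply, Pi.pow_apply]
  rw [integral_sub integrable_condExp (hX.condExp one_le_two).integrable_sq, integral_condExp hm,
    sub_add_cancel]
  rfl

lemma integral_sub_const_mul_sq_eq_condExp_add_condVar (hm : m ≤ m₀) [IsFiniteMeasure μ]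
    {X h : Ω → ℝ} (hXm : StronglyMeasurable[m] X) (hX : MemLp X 2 μ) (hh : MemLp h 2 μ)
    (a : ℝ) :
    ∫ ω, (X ω - a * h ω) ^ 2 ∂μ
      = ∫ ω, (X ω - a * (μ[h | m]) ω) ^ 2 ∂μ + a ^ 2 * ∫ ω, (Var[h; μ | m]) ω ∂μ := by
  rw [integral_sub_const_mul_sq hX hh, integral_sub_const_mul_sq hX (hh.condExp one_le_two),
    integral_mul_condExp_of_stronglyMeasurable_left hm hXm (hX.integrable_mul hh)
      (hh.integrable one_le_two),
    ← integral_condVar_add_integral_sq_condExp hm hh]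
  ring

end

theorem kw_one_step_recursion_general
    {Ω : Type*} {m0 : MeasurableSpace Ω} {μ : Measure Ω} [IsProbabilityMeasure μ]
    (𝓕 : MeasurableSpace Ω) (h𝓕 : 𝓕 ≤ m0)
    (J' : ℝ → ℝ)
    (θstar K₁ K₂ : ℝ) (hK₁ : 0 < K₁)
    (hJ'lower : ∀ x : ℝ, K₁ * (x - θstar) ^ 2 ≤ (x - θstar) * J' x)
    (hJ'upper : ∀ x : ℝ, |J' x| ≤ K₂ * |x - θstar|)
    (aₙ δₙ b c β γ : ℝ) (haₙ : 0 < aₙ) (hδₙ : 0 < δₙ)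
    (ε : ℝ) (hε0 : 0 < ε)
    (θn θn1 hn Δn : Ω → ℝ)
    (hθmeas : StronglyMeasurable[𝓕] θn)
    (hθL2 : MemLp θn 2 μ) (hhL2 : MemLp hn 2 μ)
    (hupd : θn1 = fun ω => θn ω - aₙ * hn ω)
    (hbias : μ[hn | 𝓕] =ᵐ[μ] fun ω => J' (θn ω) + Δn ω)
    (hΔ : ∀ᵐ ω ∂μ, |Δn ω| ≤ b * δₙ ^ β)
    (hvar : ∀ᵐ ω ∂μ,
      (μ[fun ω' => (hn ω' - (μ[hn | 𝓕]) ω') ^ 2 | 𝓕]) ω ≤ c * δₙ ^ γ) :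
    ∫ ω, (θn1 ω - θstar) ^ 2 ∂μ ≤
      (∫ ω, (θn ω - θstar) ^ 2 ∂μ) * (1 - (2 - ε) * K₁ * aₙ + 2 * K₂ ^ 2 * aₙ ^ 2)
        + 2 * b ^ 2 * aₙ ^ 2 * δₙ ^ (2 * β) + c * aₙ ^ 2 * δₙ ^ γ
        + (4 * b ^ 2 / (K₁ * ε)) * aₙ * δₙ ^ (2 * β) := by
  set B := b * δₙ ^ β
  set C := 1 - (2 - ε) * K₁ * aₙ + 2 * K₂ ^ 2 * aₙ ^ 2
  have hXL2 : MemLp (fun ω => θn ω - θstar) 2 μ := hθL2.sub (memLp_const θstar)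
  have hsplit := integral_sub_const_mul_sq_eq_condExp_add_condVar
    (X := fun ω => θn ω - θstar) h𝓕 (hθmeas.sub stronglyMeasurable_const) hXL2 hhL2 aₙ
  have hmean : ∫ ω, (θn ω - θstar - aₙ * (μ[hn | 𝓕]) ω) ^ 2 ∂μ
      ≤ ∫ ω, ((θn ω - θstar) ^ 2 * C + (2 * aₙ ^ 2 * B ^ 2 + aₙ * (B ^ 2 / (K₁ * ε)))) ∂μ := by
    refine integral_mono_ae ((hXL2.sub ((hhL2.condExp one_le_two).const_mul aₙ)).integrable_sq)
      ((hXL2.integrable_sq.mul_const C).add (integrable_const _)) ?_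
    filter_upwards [hbias, hΔ] with ω hm hd
    rw [hm, ← add_assoc]
    exact sq_sub_mul_add_le_of_coercive haₙ.le hK₁ hε0 (hJ'lower _) (hJ'upper _) hd
  have hcondVar : ∫ ω, (Var[hn; μ | 𝓕]) ω ∂μ ≤ c * δₙ ^ γ :=
    (integral_mono_ae integrable_condExp (integrable_const _) hvar).trans_eq (by simp)
  have hB : B ^ 2 = b ^ 2 * δₙ ^ (2 * β) := by
    rw [mul_pow, mul_comm 2 β, Real.rpow_mul hδₙ.le, Real.rpow_two]
  have hslack : b ^ 2 * δₙ ^ (2 * β) / (K₁ * ε) ≤ 4 * b ^ 2 / (K₁ * ε) * δₙ ^ (2 * β) := by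
    rw [div_mul_eq_mul_div]
    gcongr
    nlinarith [sq_nonneg b, Real.rpow_nonneg hδₙ.le (2 * β)]
  rw [integral_add (hXL2.integrable_sq.mul_const C) (integrable_const _), integral_mul_const,
    integral_const, probReal_univ, one_smul, hB] at hmean
  simp only [hupd, sub_right_comm _ (aₙ * _) θstar]
  rw [hsplit]
  linarith [mul_le_mul_of_nonneg_left hcondVar (sq_nonneg aₙ),
    mul_le_mul_of_nonneg_left hslack haₙ.le]

/-- One-step mean-square recursion for the Kiefer–Wolfowitz iteration. -/
theorem kw_one_step_recursion
    {Ω : Type*} {m0 : MeasurableSpace Ω} {μ : Measure Ω} [IsProbabilityMeasure μ]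
    (𝓕 : MeasurableSpace Ω) (h𝓕 : 𝓕 ≤ m0)
    (J J' : ℝ → ℝ) (hJ : ∀ x, HasDerivAt J (J' x) x)
    (θstar K₁ K₂ : ℝ) (hK₁ : 0 < K₁) (hK₁₂ : K₁ ≤ K₂)
    (hJ'lower : ∀ x : ℝ, K₁ * (x - θstar) ^ 2 ≤ (x - θstar) * J' x)
    (hJ'upper : ∀ x : ℝ, |J' x| ≤ K₂ * |x - θstar|)
    (aₙ δₙ b c β γ : ℝ) (haₙ : 0 < aₙ) (hδₙ : 0 < δₙ) (hb : 0 < b)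
    (hc : 0 ≤ c) (hβ : 0 ≤ β)
    (ε : ℝ) (hε0 : 0 < ε) (hε1 : ε < 1)
    (θn θn1 hn Δn : Ω → ℝ)
    (hθmeas : StronglyMeasurable[𝓕] θn)
    (hθL2 : MemLp θn 2 μ) (hhL2 : MemLp hn 2 μ)
    (hupd : θn1 = fun ω => θn ω - aₙ * hn ω)
    (hbias : μ[hn | 𝓕] =ᵐ[μ] fun ω => J' (θn ω) + Δn ω)
    (hΔ : ∀ᵐ ω ∂μ, |Δn ω| ≤ b * δₙ ^ β)
    (hvar : ∀ᵐ ω ∂μ,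
      (μ[fun ω' => (hn ω' - (μ[hn | 𝓕]) ω') ^ 2 | 𝓕]) ω ≤ c * δₙ ^ γ) :
    ∫ ω, (θn1 ω - θstar) ^ 2 ∂μ ≤
      (∫ ω, (θn ω - θstar) ^ 2 ∂μ) * (1 - (2 - ε) * K₁ * aₙ + 2 * K₂ ^ 2 * aₙ ^ 2)
        + 2 * b ^ 2 * aₙ ^ 2 * δₙ ^ (2 * β) + c * aₙ ^ 2 * δₙ ^ γ
        + (4 * b ^ 2 / (K₁ * ε)) * aₙ * δₙ ^ (2 * β) :=
  kw_one_step_recursion_general 𝓕 h𝓕 J' θstar K₁ K₂ hK₁ hJ'lower hJ'upper aₙ δₙ b c β γ haₙ hδₙ ε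
    hε0 θn θn1 hn Δn hθmeas hθL2 hhL2 hupd hbias hΔ hvar
end

section
/- Let A > 0, 0 < α ≤ 1, and let n₀ ≥ 1 be an integer. Then lim_{n→∞} n^{−α} · Σ_{i=n₀}^{n−1} (1 − A·n^{−α})^{n−i} exists and equals 1/A if 0 < α < 1, and equals (1 − e^{−A})/A if α = 1. -/
open Filter Real Finset Topology

private lemma gsnl_sum_eq {A x : ℝ} (hx : 0 < x) (hA : 0 < A) (hAx : A * x ≠ 0)
    {n₀ n : ℕ} (hn : n₀ ≤ n) :
    x * ∑ i ∈ Finset.Ico n₀ n, (1 - A * x) ^ (n - i)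
      = (1 - A * x) * (1 - (1 - A * x) ^ (n - n₀)) / A := by
  set r : ℝ := 1 - A * x with hrdef
  have hrne : r ≠ 1 := by
    intro h
    apply hAx
    linarith [h]
  set m : ℕ := n - n₀ with hm
  have h1 : ∑ i ∈ Finset.Ico n₀ n, r ^ (n - i) = ∑ j ∈ Finset.range m, r ^ (m - j) := by
    rw [Finset.sum_Ico_eq_sum_range]
    refine Finset.sum_congr rfl fun j hj => ?_
    congr 1
    omega
  have h2 : ∑ j ∈ Finset.range m, r ^ (m - j) = ∑ j ∈ Finset.range m, r ^ (j + 1) := by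
    rw [← Finset.sum_range_reflect (fun j => r ^ (j + 1)) m]
    refine Finset.sum_congr rfl fun j hj => ?_
    rw [Finset.mem_range] at hj
    congr 1
    omega
  have h3 : ∑ j ∈ Finset.range m, r ^ (j + 1) = r * ((r ^ m - 1) / (r - 1)) := by
    rw [← geom_sum_eq hrne m, Finset.mul_sum]
    refine Finset.sum_congr rfl fun j _ => ?_
    rw [pow_succ']
  rw [h1, h2, h3]
  have hr1 : r - 1 = -(A * x) := by rw [hrdef]; ring
  rw [hr1]
  field_simp
  ring

/-- Limit of normalized geometric sums: for `A > 0` and `0 < α ≤ 1`,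
`n^{−α} Σ_{i=n₀}^{n−1} (1 − A n^{−α})^{n−i}` converges, to `1/A` if `α < 1`
and to `(1 − e^{−A})/A` if `α = 1`. -/
theorem geometric_sum_normalized_limit (A α : ℝ) (hA : 0 < A)
    (hα0 : 0 < α) (hα1 : α ≤ 1) (n₀ : ℕ) (hn₀ : 1 ≤ n₀) :
    Filter.Tendsto
      (fun n : ℕ => (n : ℝ) ^ (-α) *
        ∑ i ∈ Finset.Ico n₀ n, (1 - A * (n : ℝ) ^ (-α)) ^ (n - i))
      Filter.atTop
      (nhds (if α = 1 then (1 - Real.exp (-A)) / A else 1 / A)) := by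
  set r : ℕ → ℝ := fun n => 1 - A * (n : ℝ) ^ (-α) with hrdef
  -- A * n^{-α} → 0
  have hx0 : Tendsto (fun n : ℕ => A * (n : ℝ) ^ (-α)) atTop (𝓝 0) := by
    have h := (tendsto_rpow_neg_atTop hα0).comp tendsto_natCast_atTop_atTop
    simpa using h.const_mul A
  have hr1 : Tendsto r atTop (𝓝 1) := by
    have := hx0.const_sub 1
    simpa [hrdef] using this
  -- eventually 0 < r n < 1
  have hxpos : ∀ᶠ n : ℕ in atTop, 0 < A * (n : ℝ) ^ (-α) := by
    filter_upwards [eventually_ge_atTop 1] with n hn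
    have : (0 : ℝ) < (n : ℝ) := by exact_mod_cast hn
    positivity
  have hxlt : ∀ᶠ n : ℕ in atTop, A * (n : ℝ) ^ (-α) < 1 :=
    hx0.eventually_lt_const one_pos
  have hrpos : ∀ᶠ n : ℕ in atTop, 0 < r n := by
    filter_upwards [hxlt] with n hn
    simp only [hrdef]
    linarith
  have hrlt : ∀ᶠ n : ℕ in atTop, r n < 1 := by
    filter_upwards [hxpos] with n hn
    simp only [hrdef]
    linarith
  -- limit of r n ^ (n - n₀)
  have hL : Tendsto (fun n : ℕ => r n ^ (n - n₀)) atTop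
      (𝓝 (if α = 1 then Real.exp (-A) else 0)) := by
    rcases eq_or_lt_of_le hα1 with hα | hα
    · -- α = 1
      subst hα
      rw [if_pos rfl]
      have hpow : Tendsto (fun n : ℕ => r n ^ n) atTop (𝓝 (Real.exp (-A))) := by
        have h := Real.tendsto_one_add_div_pow_exp (-A)
        refine h.congr' ?_
        filter_upwards [eventually_ge_atTop 1] with n hn
        have hn' : (0 : ℝ) < (n : ℝ) := by exact_mod_cast hn
        simp only [hrdef]
        rw [Real.rpow_neg_one]
        field_simp
        ring_nf
      have hden : Tendsto (fun n : ℕ => r n ^ n₀) atTop (𝓝 1) := by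
        simpa using hr1.pow n₀
      have := hpow.div hden one_ne_zero
      rw [div_one] at this
      refine this.congr' ?_
      filter_upwards [hrpos, eventually_ge_atTop n₀] with n h0 hn
      simp only [Pi.div_apply, div_eq_mul_inv]
      exact (pow_sub₀ _ (ne_of_gt h0) hn).symm
    · -- α < 1
      rw [if_neg (ne_of_lt hα)]
      have hub : Tendsto (fun n : ℕ =>
          Real.exp (-(A * (n : ℝ) ^ (-α) * ((n : ℕ) - n₀ : ℕ)))) atTop (𝓝 0) := by
        apply Real.tendsto_exp_atBot.comp
        apply tendsto_neg_atBot_iff.mpr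
        have hbase : Tendsto (fun n : ℕ => A / 2 * (n : ℝ) ^ (1 - α)) atTop atTop := by
          apply Tendsto.const_mul_atTop (by linarith : (0:ℝ) < A / 2)
          exact (tendsto_rpow_atTop (by linarith : 0 < 1 - α)).comp
            tendsto_natCast_atTop_atTop
        refine tendsto_atTop_mono' atTop ?_ hbase
        filter_upwards [eventually_ge_atTop (2 * n₀)] with n hn
        have hn1 : 1 ≤ n := by omega
        have hnpos : (0 : ℝ) < (n : ℝ) := by exact_mod_cast hn1
        have hxp : (0 : ℝ) < (n : ℝ) ^ (-α) := Real.rpow_pos_of_pos hnpos _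
        have hcast : ((n - n₀ : ℕ) : ℝ) = (n : ℝ) - (n₀ : ℝ) := by
          rw [Nat.cast_sub (by omega)]
        have hge : (n : ℝ) / 2 ≤ (n : ℝ) - (n₀ : ℝ) := by
          have : (n₀ : ℝ) ≤ (n : ℝ) / 2 := by
            rw [le_div_iff₀ (by norm_num : (0:ℝ) < 2)]
            exact_mod_cast (by omega : n₀ * 2 ≤ n)
          linarith
        have hrw : (n : ℝ) ^ (1 - α) = (n : ℝ) ^ (-α) * (n : ℝ) := by
          rw [show (1 : ℝ) - α = -α + 1 by ring, Real.rpow_add hnpos,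
            Real.rpow_one]
        calc A / 2 * (n : ℝ) ^ (1 - α) = A * (n : ℝ) ^ (-α) * ((n : ℝ) / 2) := by
              rw [hrw]; ring
          _ ≤ A * (n : ℝ) ^ (-α) * ((n : ℝ) - (n₀ : ℝ)) := by
              have : (0:ℝ) < A * (n : ℝ) ^ (-α) := by positivity
              nlinarith
          _ = A * (n : ℝ) ^ (-α) * ((n - n₀ : ℕ) : ℝ) := by rw [hcast]
      refine squeeze_zero' ?_ ?_ hub
      · filter_upwards [hrpos] with n h0
        positivity
      · filter_upwards [hrpos] with n h0
        have hle : r n ≤ Real.exp (-(A * (n : ℝ) ^ (-α))) := by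
          have := Real.add_one_le_exp (-(A * (n : ℝ) ^ (-α)))
          simp only [hrdef]
          linarith
        calc r n ^ (n - n₀) ≤ Real.exp (-(A * (n : ℝ) ^ (-α))) ^ (n - n₀) :=
              pow_le_pow_left₀ (le_of_lt h0) hle _
          _ = Real.exp (-(A * (n : ℝ) ^ (-α) * ((n - n₀ : ℕ) : ℝ))) := by
              rw [← Real.exp_nat_mul]
              congr 1
              ring
  -- main limit for rewritten expression
  have hmain : Tendsto (fun n : ℕ => r n * (1 - r n ^ (n - n₀)) / A) atTop
      (𝓝 (if α = 1 then (1 - Real.exp (-A)) / A else 1 / A)) := by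
    have h := ((hr1.mul ((tendsto_const_nhds (x := (1:ℝ))).sub hL)).div_const A)
    convert h using 2
    split <;> ring
  refine hmain.congr' ?_
  filter_upwards [eventually_ge_atTop n₀, eventually_ge_atTop 1] with n hn hn1
  have hnpos : (0 : ℝ) < (n : ℝ) := by exact_mod_cast hn1
  have hxp : (0 : ℝ) < (n : ℝ) ^ (-α) := Real.rpow_pos_of_pos hnpos _
  have hAx : A * (n : ℝ) ^ (-α) ≠ 0 := by positivity
  exact (gsnl_sum_eq hxp hA hAx hn).symm
end

section
/- (Corollary 3(a)) Under the mirror descent setup with β = 1 (one-sided finite differences), γ = 0, a_n = a·n^{−1/2}, and δ_n = d·n^{−1} with a, d > 0, for every n ≥ 1: E[J(θ̂_n) − J(θ*)] ≤ (C₁ + 2C₂ + 2C₃)·max(a, a^{−1})/√n + 2.5·C₄ d² a/n + C₅ d (1 + log n)/n, where C₁ = r²/2, C₂ = c/(2κ), C₃ = K₂² r²/(2κ²), C₄ = b²/κ, C₅ = b r/√(2κ). -/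
/-!
One mirror step, through the first-order optimality condition of the constrained minimiser,
the three-point identity of the Bregman divergence `D` and the `κ`-strong convexity of `ψ`
(with Young's inequality), gives pathwise
`a_n h_n (θ_n - θ*) ≤ D(θ*, θ_n) - D(θ*, θ_{n+1}) + a_n² h_n² / (4κ)`.
In expectation the noise `h_n - E[h_n | ℱ_n]` is orthogonal to `θ_n - θ*`, the bias costs at
most `b δ_n r / √(2κ)` because the Bregman bounds confine `Θ` to that radius around `θ*`, and
`E[h_n²]` is at most the conditional variance plus the squared conditional mean. Since
`J(θ_n) - J(θ*) ≤ J'(θ_n) (θ_n - θ*)`, summation by parts over the decreasing steps and Jensen's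
inequality for the average bound the error by
`(r² / (2 a_n) + Σ_{i ≤ n} (a_i E[h_i²] / (4κ) + b δ_i r / √(2κ))) / n`. For `a_i = a i^{-1/2}`
and `δ_i = d / i` one has `Σ a_i ≤ 2a√n`, `Σ a_i δ_i² ≤ 2ad²` and `Σ δ_i ≤ d (1 + log n)`.
-/

open MeasureTheory Filter Finset ProbabilityTheory

noncomputable def bregman (ψ ψ' : ℝ → ℝ) (x y : ℝ) : ℝ := ψ x - ψ y - ψ' y * (x - y)

theorem measurable_bregman {ψ ψ' : ℝ → ℝ} (hψ : ∀ x, HasDerivAt ψ (ψ' x) x) (u : ℝ) :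
    Measurable (bregman ψ ψ' u) := by
  have hψ' : ψ' = deriv ψ := funext fun y => (hψ y).deriv.symm
  have hψc : Continuous ψ := Differentiable.continuous fun y => (hψ y).differentiableAt
  exact (hψc.measurable.const_sub _).sub
    ((hψ' ▸ measurable_deriv ψ).mul (measurable_const.sub measurable_id))

theorem ConvexOn.add_mul_sub_le_of_hasDerivAt {S : Set ℝ} {f : ℝ → ℝ} {f' x y : ℝ}
    (hf : ConvexOn ℝ S f) (hx : x ∈ S) (hy : y ∈ S) (hf' : HasDerivAt f f' x) :
    f x + f' * (y - x) ≤ f y := by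
  rcases lt_trichotomy x y with hxy | rfl | hxy
  · have := hf.le_slope_of_hasDerivAt hx hy hxy hf'
    rw [slope_def_field, le_div_iff₀ (sub_pos.2 hxy)] at this
    linarith
  · simp
  · have := hf.slope_le_of_hasDerivAt hy hx hxy hf'
    rw [slope_def_field, div_le_iff₀ (sub_pos.2 hxy)] at this
    linarith

theorem IsMinOn.hasDerivAt_mul_sub_nonneg {s : Set ℝ} {f : ℝ → ℝ} {f' a y : ℝ}
    (h : IsMinOn f s a) (hs : Convex ℝ s) (ha : a ∈ s) (hy : y ∈ s) (hf : HasDerivAt f f' a) :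
    0 ≤ f' * (y - a) := by
  have := h.localize.hasFDerivWithinAt_nonneg hf.hasFDerivAt.hasFDerivWithinAt
    (sub_mem_posTangentConeAt_of_segment_subset (hs.segment_subset ha hy))
  simpa [mul_comm] using this

theorem bregman_three_point (ψ ψ' : ℝ → ℝ) (u x y : ℝ) :
    bregman ψ ψ' u y - bregman ψ ψ' u x - bregman ψ ψ' x y = (ψ' x - ψ' y) * (u - x) := by
  unfold bregman; ring

theorem mirror_step_le {Θ : Set ℝ} {ψ ψ' : ℝ → ℝ} {κ a g x x' u : ℝ}
    (hΘ : Convex ℝ Θ) (hψ : HasDerivAt ψ (ψ' x') x') (hκ : 0 < κ) (ha : 0 < a)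
    (hx' : x' ∈ Θ) (hu : u ∈ Θ) (hstrong : κ * (x' - x) ^ 2 ≤ bregman ψ ψ' x' x)
    (hmin : IsMinOn (fun z => g * z + bregman ψ ψ' z x / a) Θ x') :
    a * (g * (x - u)) ≤ bregman ψ ψ' u x - bregman ψ ψ' u x' + a ^ 2 * g ^ 2 / (4 * κ) := by
  have hderiv : HasDerivAt (fun z => g * z + bregman ψ ψ' z x / a)
      (g + (ψ' x' - ψ' x) / a) x' := by
    have hD : HasDerivAt (fun z => bregman ψ ψ' z x) (ψ' x' - ψ' x) x' :=
      ((hψ.sub_const (ψ x)).sub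
        (((hasDerivAt_id x').sub_const x).const_mul (ψ' x))).congr_deriv (by ring)
    exact (((hasDerivAt_id x').const_mul g).add (hD.div_const a)).congr_deriv (by ring)
  have hopt := hmin.hasDerivAt_mul_sub_nonneg hΘ hx' hu hderiv
  have hopt' : 0 ≤ (a * g + (ψ' x' - ψ' x)) * (u - x') := by
    have := mul_nonneg ha.le hopt
    rwa [← mul_assoc, mul_add, mul_div_cancel₀ _ ha.ne'] at this
  have hthree := bregman_three_point ψ ψ' u x' x
  -- Young's inequality absorbs the drift `a g (x - x')` into the strong convexity term
  have hyoung : a * (g * (x - x')) - κ * (x' - x) ^ 2 ≤ a ^ 2 * g ^ 2 / (4 * κ) := by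
    rw [le_div_iff₀ (by positivity)]
    nlinarith [sq_nonneg (2 * κ * (x' - x) + a * g)]
  linear_combination hopt' + hstrong + hyoung - hthree

theorem mirror_step_gap_le {Θ : Set ℝ} {J J' ψ ψ' : ℝ → ℝ} {κ a g m e ρ x x' u : ℝ}
    (hΘ : Convex ℝ Θ) (hJconv : ConvexOn ℝ Set.univ J) (hJ : HasDerivAt J (J' x) x)
    (hψ : HasDerivAt ψ (ψ' x') x') (hκ : 0 < κ) (ha : 0 < a) (hx' : x' ∈ Θ) (hu : u ∈ Θ)
    (hstrong : κ * (x' - x) ^ 2 ≤ bregman ψ ψ' x' x)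
    (hmin : IsMinOn (fun z => g * z + bregman ψ ψ' z x / a) Θ x')
    (hm : |m - J' x| ≤ e) (hxu : |x - u| ≤ ρ) :
    a * (J x - J u) ≤ bregman ψ ψ' u x - bregman ψ ψ' u x' + a ^ 2 / (4 * κ) * g ^ 2
      - a * ((x - u) * (g - m)) + a * (e * ρ) := by
  have htangent := hJconv.add_mul_sub_le_of_hasDerivAt trivial trivial hJ (y := u)
  have hbias : -((m - J' x) * (x - u)) ≤ e * ρ := by
    refine (neg_le_abs _).trans ?_
    rw [abs_mul]
    exact mul_le_mul hm hxu (abs_nonneg _) ((abs_nonneg _).trans hm)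
  have hgap : J x - J u ≤ g * (x - u) - (x - u) * (g - m) + e * ρ := by linarith
  linear_combination mul_le_mul_of_nonneg_left hgap ha.le
    + mirror_step_le hΘ hψ hκ ha hx' hu hstrong hmin

theorem abs_sub_le_of_bregman_le {ψ ψ' : ℝ → ℝ} {κ r u x : ℝ} (hκ : 0 < κ) (hr : 0 ≤ r)
    (hlow : κ * (u - x) ^ 2 ≤ bregman ψ ψ' u x) (hup : bregman ψ ψ' u x ≤ r ^ 2 / 2) :
    |x - u| ≤ r / √(2 * κ) := by
  refine abs_le_of_sq_le_sq ?_ (by positivity)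
  rw [div_pow, Real.sq_sqrt (by positivity), le_div_iff₀ (by positivity)]
  nlinarith

theorem sq_le_of_abs_sub_le {m p K t ρ e : ℝ} (hp : |p| ≤ K * |t|) (ht : |t| ≤ ρ)
    (hm : |m - p| ≤ e) : m ^ 2 ≤ 2 * K ^ 2 * ρ ^ 2 + 2 * e ^ 2 := by
  have hp2 : p ^ 2 ≤ K ^ 2 * ρ ^ 2 :=
    calc p ^ 2 = |p| ^ 2 := (sq_abs p).symm
      _ ≤ (K * |t|) ^ 2 := pow_le_pow_left₀ (abs_nonneg _) hp 2
      _ = K ^ 2 * |t| ^ 2 := by ring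
      _ ≤ K ^ 2 * ρ ^ 2 := by gcongr
  have hm2 : (m - p) ^ 2 ≤ e ^ 2 := by
    rw [← sq_abs]
    exact pow_le_pow_left₀ (abs_nonneg _) hm 2
  have := add_sq_le (a := p) (b := m - p)
  rw [add_sub_cancel] at this
  linarith

theorem Convex.sum_div_card_mem {ι : Type*} {Θ : Set ℝ} (hΘ : Convex ℝ Θ) {s : Finset ι}
    (hs : s.Nonempty) {x : ι → ℝ} (hx : ∀ i ∈ s, x i ∈ Θ) : (∑ i ∈ s, x i) / #s ∈ Θ := by
  have := hΘ.sum_mem (w := fun _ => (#s : ℝ)⁻¹) (fun _ _ => by positivity)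
    (by simp [hs.card_ne_zero]) hx
  simpa [sum_div, div_eq_inv_mul, mul_sum] using this

theorem ConvexOn.map_sum_div_card_le {ι : Type*} {f : ℝ → ℝ} (hf : ConvexOn ℝ Set.univ f)
    {s : Finset ι} (hs : s.Nonempty) (x : ι → ℝ) :
    f ((∑ i ∈ s, x i) / #s) ≤ (∑ i ∈ s, f (x i)) / #s := by
  have := hf.map_sum_le (w := fun _ => (#s : ℝ)⁻¹) (p := x) (fun _ _ => by positivity)
    (by simp [hs.card_ne_zero]) (fun _ _ => trivial)
  simpa [sum_div, div_eq_inv_mul, mul_sum] using this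

theorem sum_Icc_sub_succ_div_le {D A : ℕ → ℝ} {B : ℝ} {N : ℕ} (hN : 1 ≤ N)
    (hD₀ : ∀ n, 1 ≤ n → 0 ≤ D n) (hDB : ∀ n, 1 ≤ n → D n ≤ B)
    (hA : ∀ n, 1 ≤ n → 0 < A n) (hA_anti : ∀ n, 1 ≤ n → A (n + 1) ≤ A n) :
    ∑ n ∈ Icc 1 N, (D n - D (n + 1)) / A n ≤ B / A N := by
  -- Abel summation: the stronger claim keeps the last telescoped term `D (N + 1) / A N`
  suffices h : ∑ n ∈ Icc 1 N, (D n - D (n + 1)) / A n + D (N + 1) / A N ≤ B / A N by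
    linarith [div_nonneg (hD₀ (N + 1) (by omega)) (hA N hN).le]
  induction N, hN using Nat.le_induction with
  | base =>
    rw [Icc_self, sum_singleton, ← add_div, sub_add_cancel]
    exact div_le_div_of_nonneg_right (hDB 1 le_rfl) (hA 1 le_rfl).le
  | succ N hN ih =>
    rw [sum_Icc_succ_top (by omega)]
    have hinv : (A N)⁻¹ ≤ (A (N + 1))⁻¹ := inv_anti₀ (hA _ (by omega)) (hA_anti N hN)
    have := mul_le_mul_of_nonneg_right (hDB (N + 1) (by omega)) (sub_nonneg.2 hinv)
    simp only [div_eq_mul_inv] at ih ⊢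
    nlinarith

theorem sum_Icc_inv_sqrt_le (N : ℕ) : ∑ i ∈ Icc 1 N, (√i)⁻¹ ≤ 2 * √N := by
  induction N with
  | zero => simp
  | succ N ih =>
    rw [sum_Icc_succ_top (by omega)]
    have hs : √(N + 1 : ℝ) ^ 2 = N + 1 := Real.sq_sqrt (by positivity)
    have hpos : 0 < √(N + 1 : ℝ) := by positivity
    -- `2 (√(N + 1) - √N) = 2 / (√(N + 1) + √N) ≥ 1 / √(N + 1)`
    have hstep : (√(N + 1 : ℝ))⁻¹ ≤ 2 * √(N + 1 : ℝ) - 2 * √N := by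
      rw [inv_le_iff_one_le_mul₀ hpos]
      nlinarith [Real.sq_sqrt (Nat.cast_nonneg (α := ℝ) N), sq_nonneg (√(N + 1 : ℝ) - √N)]
    push_cast
    linarith

theorem sum_Icc_inv_sq_le_two (N : ℕ) : ∑ i ∈ Icc 1 N, ((i : ℝ) ^ 2)⁻¹ ≤ 2 := by
  have h := sum_Ioo_inv_sq_le (α := ℝ) 0 (N + 1)
  rwa [show Ioo 0 (N + 1) = Icc 1 N by ext; simp; omega, Nat.cast_zero, zero_add, div_one] at h

theorem sum_Icc_inv_le_one_add_log (N : ℕ) : ∑ i ∈ Icc 1 N, (i : ℝ)⁻¹ ≤ 1 + Real.log N := by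
  simpa [harmonic_eq_sum_Icc] using harmonic_le_one_add_log N

section Probability

variable {Ω : Type*} {F m0 : MeasurableSpace Ω} {μ : Measure Ω}

theorem integrable_comp_of_forall_mem_abs_le [IsFiniteMeasure μ] {Θ : Set ℝ} {f : ℝ → ℝ}
    {X : Ω → ℝ} {C : ℝ} (hf : Measurable f) (hX : AEMeasurable X μ) (hXΘ : ∀ᵐ ω ∂μ, X ω ∈ Θ)
    (hC : ∀ y ∈ Θ, |f y| ≤ C) : Integrable (fun ω => f (X ω)) μ :=
  .of_bound (hf.comp_aemeasurable hX).aestronglyMeasurable C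
    (by filter_upwards [hXΘ] with ω hω using hC _ hω)

theorem integral_mul_sub_condExp_eq_zero [IsFiniteMeasure μ] (hF : F ≤ m0) {φ g : Ω → ℝ} {C : ℝ}
    (hφ : StronglyMeasurable[F] φ) (hφC : ∀ᵐ ω ∂μ, |φ ω| ≤ C) (hg : Integrable g μ) :
    ∫ ω, φ ω * (g ω - μ[g|F] ω) ∂μ = 0 := by
  have hφμ : AEStronglyMeasurable φ μ := (hφ.mono hF).aestronglyMeasurable
  have hφg : Integrable (fun ω => φ ω * g ω) μ := hg.bdd_mul hφμ hφC
  have hφm : Integrable (fun ω => φ ω * μ[g|F] ω) μ := integrable_condExp.bdd_mul hφμ hφC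
  have hpull : ∫ ω, φ ω * μ[g|F] ω ∂μ = ∫ ω, φ ω * g ω ∂μ := by
    calc ∫ ω, φ ω * μ[g|F] ω ∂μ = ∫ ω, μ[φ * g|F] ω ∂μ :=
          integral_congr_ae (condExp_mul_of_stronglyMeasurable_left hφ hφg hg).symm
      _ = ∫ ω, φ ω * g ω ∂μ := integral_condExp hF
  simp_rw [mul_sub]
  rw [integral_sub hφg hφm, hpull, sub_self]

theorem integral_sq_le_of_condVar_le [IsProbabilityMeasure μ] (hF : F ≤ m0) {X : Ω → ℝ}
    {c M : ℝ} (hX : MemLp X 2 μ) (hvar : ∀ᵐ ω ∂μ, Var[X; μ | F] ω ≤ c)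
    (hmean : ∀ᵐ ω ∂μ, μ[X|F] ω ^ 2 ≤ M) :
    ∫ ω, X ω ^ 2 ∂μ ≤ c + M := by
  have hdecomp := condVar_ae_eq_condExp_sq_sub_sq_condExp hF hX
  have hmean_int : Integrable (fun ω => μ[X|F] ω ^ 2) μ :=
    (hX.condExp (m := F) one_le_two).integrable_sq
  calc ∫ ω, X ω ^ 2 ∂μ = ∫ ω, μ[X ^ 2|F] ω ∂μ := (integral_condExp hF).symm
    _ = ∫ ω, (Var[X; μ | F] ω + μ[X|F] ω ^ 2) ∂μ :=
        integral_congr_ae (hdecomp.mono fun ω hω => by simp [hω])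
    _ = ∫ ω, Var[X; μ | F] ω ∂μ + ∫ ω, μ[X|F] ω ^ 2 ∂μ :=
        integral_add integrable_condVar hmean_int
    _ ≤ c + M := add_le_add
        (by simpa using integral_mono_ae integrable_condVar (integrable_const c) hvar)
        (by simpa using integral_mono_ae hmean_int (integrable_const M) hmean)

theorem IsCompact.integrable_comp [IsFiniteMeasure μ] {Θ : Set ℝ} (hΘ : IsCompact Θ)
    {f : ℝ → ℝ} (hf : Continuous f) {X : Ω → ℝ} (hX : AEMeasurable X μ)
    (hXΘ : ∀ᵐ ω ∂μ, X ω ∈ Θ) : Integrable (fun ω => f (X ω)) μ := by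
  obtain ⟨C, hC⟩ := hΘ.exists_bound_of_continuousOn hf.continuousOn
  exact integrable_comp_of_forall_mem_abs_le hf.measurable hX hXΘ hC

theorem integral_comp_sum_div_card_le [IsFiniteMeasure μ] {ι : Type*} {Θ : Set ℝ}
    (hΘcp : IsCompact Θ) (hΘcv : Convex ℝ Θ) {f : ℝ → ℝ} (hf : ConvexOn ℝ Set.univ f)
    (hfc : Continuous f) {s : Finset ι} (hs : s.Nonempty) {X : ι → Ω → ℝ}
    (hX : ∀ i ∈ s, AEMeasurable (X i) μ) (hXΘ : ∀ i ∈ s, ∀ᵐ ω ∂μ, X i ω ∈ Θ) :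
    ∫ ω, f ((∑ i ∈ s, X i ω) / #s) ∂μ ≤ (∑ i ∈ s, ∫ ω, f (X i ω) ∂μ) / #s := by
  have hfX : ∀ i ∈ s, Integrable (fun ω => f (X i ω)) μ := fun i hi =>
    hΘcp.integrable_comp hfc (hX i hi) (hXΘ i hi)
  have havg : Integrable (fun ω => f ((∑ i ∈ s, X i ω) / #s)) μ := by
    refine hΘcp.integrable_comp hfc ((Finset.aemeasurable_fun_sum _ hX).div_const _) ?_
    filter_upwards [(eventually_all_finset s).2 hXΘ] with ω hω using hΘcv.sum_div_card_mem hs hω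
  rw [← integral_finsetSum s hfX, ← integral_div]
  exact integral_mono havg ((integrable_finsetSum s hfX).div_const _)
    fun ω => hf.map_sum_div_card_le hs _

theorem integral_sub_le_of_mirror_step [IsProbabilityMeasure μ] (hF : F ≤ m0)
    {Θ : Set ℝ} (hΘcp : IsCompact Θ) (hΘcv : Convex ℝ Θ)
    {J J' : ℝ → ℝ} (hJconv : ConvexOn ℝ Set.univ J) (hJ : ∀ x, HasDerivAt J (J' x) x)
    {ψ ψ' : ℝ → ℝ} (hψ : ∀ x, HasDerivAt ψ (ψ' x) x)
    {κ ρ B K a e c θstar : ℝ} (hκ : 0 < κ) (ha : 0 < a) (hθstar : θstar ∈ Θ)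
    (hD_lower : ∀ x ∈ Θ, ∀ y ∈ Θ, κ * (x - y) ^ 2 ≤ bregman ψ ψ' x y)
    (hD_upper : ∀ x ∈ Θ, bregman ψ ψ' θstar x ≤ B)
    (hρ : ∀ x ∈ Θ, |x - θstar| ≤ ρ) (hJ' : ∀ x ∈ Θ, |J' x| ≤ K * |x - θstar|)
    {x x' g : Ω → ℝ} (hx : StronglyMeasurable[F] x) (hx' : AEMeasurable x' μ)
    (hg : MemLp g 2 μ) (hxΘ : ∀ᵐ ω ∂μ, x ω ∈ Θ) (hx'Θ : ∀ᵐ ω ∂μ, x' ω ∈ Θ)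
    (hstep : ∀ᵐ ω ∂μ, IsMinOn (fun z => g ω * z + bregman ψ ψ' z (x ω) / a) Θ (x' ω))
    (hbias : ∀ᵐ ω ∂μ, |μ[g|F] ω - J' (x ω)| ≤ e) (hvar : ∀ᵐ ω ∂μ, Var[g; μ | F] ω ≤ c) :
    ∫ ω, (J (x ω) - J θstar) ∂μ ≤
      (∫ ω, bregman ψ ψ' θstar (x ω) ∂μ - ∫ ω, bregman ψ ψ' θstar (x' ω) ∂μ) / a
        + a * (c + 2 * K ^ 2 * ρ ^ 2 + 2 * e ^ 2) / (4 * κ) + e * ρ := by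
  set m := μ[g|F]
  have hxμ : AEMeasurable x μ := (hx.mono hF).measurable.aemeasurable
  have hxρ : ∀ᵐ ω ∂μ, |x ω - θstar| ≤ ρ := by filter_upwards [hxΘ] with ω hω using hρ _ hω
  have hDB : ∀ y ∈ Θ, |bregman ψ ψ' θstar y| ≤ B := fun y hy => abs_le.2
    ⟨by nlinarith [hD_lower θstar hθstar y hy, hD_upper y hy, sq_nonneg (θstar - y)], hD_upper y hy⟩
  have iD : Integrable (fun ω => bregman ψ ψ' θstar (x ω)) μ :=
    integrable_comp_of_forall_mem_abs_le (measurable_bregman hψ θstar) hxμ hxΘ hDB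
  have iD' : Integrable (fun ω => bregman ψ ψ' θstar (x' ω)) μ :=
    integrable_comp_of_forall_mem_abs_le (measurable_bregman hψ θstar) hx' hx'Θ hDB
  have iJ : Integrable (fun ω => J (x ω) - J θstar) μ := hΘcp.integrable_comp
    ((Differentiable.continuous fun y => (hJ y).differentiableAt).sub continuous_const) hxμ hxΘ
  have ig2 := hg.integrable_sq
  have iφ : Integrable (fun ω => (x ω - θstar) * (g ω - m ω)) μ :=
    ((hg.integrable one_le_two).sub integrable_condExp).bdd_mul
      ((hx.mono hF).sub stronglyMeasurable_const).aestronglyMeasurable hxρ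
  have hpt : ∀ᵐ ω ∂μ, a * (J (x ω) - J θstar) ≤ bregman ψ ψ' θstar (x ω)
      - bregman ψ ψ' θstar (x' ω) + a ^ 2 / (4 * κ) * g ω ^ 2
      - a * ((x ω - θstar) * (g ω - m ω)) + a * (e * ρ) := by
    filter_upwards [hxΘ, hx'Θ, hstep, hbias] with ω hxω hx'ω hstepω hbiasω
    exact mirror_step_gap_le hΘcv hJconv (hJ _) (hψ _) hκ ha hx'ω hθstar
      (hD_lower _ hx'ω _ hxω) hstepω hbiasω (hρ _ hxω)
  have hmean : ∀ᵐ ω ∂μ, m ω ^ 2 ≤ 2 * K ^ 2 * ρ ^ 2 + 2 * e ^ 2 := by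
    filter_upwards [hxΘ, hbias] with ω hxω hbiasω
    exact sq_le_of_abs_sub_le (hJ' _ hxω) (hρ _ hxω) hbiasω
  have hint : a * ∫ ω, (J (x ω) - J θstar) ∂μ ≤ ∫ ω, bregman ψ ψ' θstar (x ω) ∂μ
      - ∫ ω, bregman ψ ψ' θstar (x' ω) ∂μ + a ^ 2 / (4 * κ) * ∫ ω, g ω ^ 2 ∂μ
      - a * ∫ ω, (x ω - θstar) * (g ω - m ω) ∂μ + a * (e * ρ) := by
    rw [← integral_const_mul]
    refine (integral_mono_ae (by fun_prop) (by fun_prop) hpt).trans_eq ?_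
    rw [integral_add, integral_sub, integral_add, integral_sub iD iD',
      integral_const_mul, integral_const_mul, integral_const]
    all_goals first | simp | fun_prop
  have horth : ∫ ω, (x ω - θstar) * (g ω - m ω) ∂μ = 0 :=
    integral_mul_sub_condExp_eq_zero hF (hx.sub stronglyMeasurable_const) hxρ
      (hg.integrable one_le_two)
  rw [horth, mul_zero, sub_zero] at hint
  rw [div_add' _ _ _ ha.ne', div_add' _ _ _ ha.ne', le_div_iff₀' ha]
  linear_combination hint + mul_le_mul_of_nonneg_left
    (integral_sq_le_of_condVar_le hF hg hvar hmean) (by positivity : 0 ≤ a ^ 2 / (4 * κ))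

theorem integral_average_sub_le [IsProbabilityMeasure μ]
    (ℱ : ℕ → MeasurableSpace Ω) (hℱ : ∀ n, ℱ n ≤ m0)
    {Θ : Set ℝ} (hΘcp : IsCompact Θ) (hΘcv : Convex ℝ Θ)
    {J J' : ℝ → ℝ} (hJconv : ConvexOn ℝ Set.univ J) (hJ : ∀ x, HasDerivAt J (J' x) x)
    {ψ ψ' : ℝ → ℝ} (hψ : ∀ x, HasDerivAt ψ (ψ' x) x)
    {κ r K b c θstar : ℝ} (hκ : 0 < κ) (hr : 0 ≤ r) (hθstar : θstar ∈ Θ)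
    (hD_lower : ∀ x ∈ Θ, ∀ y ∈ Θ, κ * (x - y) ^ 2 ≤ bregman ψ ψ' x y)
    (hD_upper : ∀ x ∈ Θ, bregman ψ ψ' θstar x ≤ r ^ 2 / 2)
    (hJ' : ∀ x ∈ Θ, |J' x| ≤ K * |x - θstar|)
    {a δ : ℕ → ℝ} (ha : ∀ n, 1 ≤ n → 0 < a n) (ha_anti : ∀ n, 1 ≤ n → a (n + 1) ≤ a n)
    {θ h Δ : ℕ → Ω → ℝ} (hθ : ∀ n, StronglyMeasurable[ℱ n] (θ n))
    (hh : ∀ n, MemLp (h n) 2 μ) (hθΘ : ∀ n, ∀ᵐ ω ∂μ, θ n ω ∈ Θ)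
    (hstep : ∀ n, 1 ≤ n → ∀ᵐ ω ∂μ,
      IsMinOn (fun x => h n ω * x + bregman ψ ψ' x (θ n ω) / a n) Θ (θ (n + 1) ω))
    (hbias : ∀ n, 1 ≤ n → μ[h n|ℱ n] =ᵐ[μ] fun ω => J' (θ n ω) + Δ n ω)
    (hΔ : ∀ n, 1 ≤ n → ∀ᵐ ω ∂μ, |Δ n ω| ≤ b * δ n)
    (hvar : ∀ n, 1 ≤ n → ∀ᵐ ω ∂μ, Var[h n; μ | ℱ n] ω ≤ c) {N : ℕ} (hN : 1 ≤ N) :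
    ∫ ω, (J ((∑ i ∈ Icc 1 N, θ i ω) / N) - J θstar) ∂μ ≤
      (r ^ 2 / 2 / a N + ∑ i ∈ Icc 1 N, (a i * (c + K ^ 2 * r ^ 2 / κ + 2 * b ^ 2 * δ i ^ 2)
        / (4 * κ) + b * δ i * (r / √(2 * κ)))) / N := by
  set ρ := r / √(2 * κ)
  have hρ : ∀ x ∈ Θ, |x - θstar| ≤ ρ := fun x hx =>
    abs_sub_le_of_bregman_le hκ hr (hD_lower _ hθstar _ hx) (hD_upper x hx)
  have hρK : 2 * K ^ 2 * ρ ^ 2 = K ^ 2 * r ^ 2 / κ := by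
    rw [div_pow, Real.sq_sqrt (by positivity)]
    field_simp
  have hθμ : ∀ n, AEMeasurable (θ n) μ := fun n => ((hθ n).mono (hℱ n)).measurable.aemeasurable
  set DD := fun n => ∫ ω, bregman ψ ψ' θstar (θ n ω) ∂μ
  have hD_nonneg : ∀ n, 0 ≤ᵐ[μ] fun ω => bregman ψ ψ' θstar (θ n ω) := fun n => by
    filter_upwards [hθΘ n] with ω hω
    exact (mul_nonneg hκ.le (sq_nonneg _)).trans (hD_lower _ hθstar _ hω)
  have hDD_nonneg : ∀ n, 0 ≤ DD n := fun n => integral_nonneg_of_ae (hD_nonneg n)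
  have hDD_le : ∀ n, DD n ≤ r ^ 2 / 2 := fun n => by
    simpa using integral_mono_of_nonneg (hD_nonneg n) (integrable_const (r ^ 2 / 2))
      (by filter_upwards [hθΘ n] with ω hω using hD_upper _ hω)
  have hE : ∀ i ∈ Icc 1 N, ∫ ω, (J (θ i ω) - J θstar) ∂μ ≤ (DD i - DD (i + 1)) / a i
      + (a i * (c + K ^ 2 * r ^ 2 / κ + 2 * b ^ 2 * δ i ^ 2) / (4 * κ) + b * δ i * ρ) := by
    intro i hi
    have hi1 := (mem_Icc.1 hi).1
    have hbias' : ∀ᵐ ω ∂μ, |μ[h i|ℱ i] ω - J' (θ i ω)| ≤ b * δ i := by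
      filter_upwards [hbias i hi1, hΔ i hi1] with ω hbiasω hΔω
      rwa [hbiasω, add_sub_cancel_left]
    have := integral_sub_le_of_mirror_step (hℱ i) hΘcp hΘcv hJconv hJ hψ hκ (ha i hi1) hθstar
      hD_lower hD_upper hρ hJ' (hθ i) (hθμ (i + 1)) (hh i) (hθΘ i) (hθΘ (i + 1)) (hstep i hi1)
      hbias' (hvar i hi1)
    rw [hρK] at this
    linear_combination this
  have hjensen := integral_comp_sum_div_card_le (f := fun y => J y - J θstar) hΘcp hΘcv
    (hJconv.sub (concaveOn_const _ convex_univ))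
    ((Differentiable.continuous fun y => (hJ y).differentiableAt).sub continuous_const)
    (nonempty_Icc.2 hN) (fun i _ => hθμ i) (fun i _ => hθΘ i)
  rw [Nat.card_Icc, Nat.add_sub_cancel] at hjensen
  calc _ ≤ (∑ i ∈ Icc 1 N, ∫ ω, (J (θ i ω) - J θstar) ∂μ) / N := hjensen
    _ ≤ (∑ i ∈ Icc 1 N, ((DD i - DD (i + 1)) / a i + (a i * (c + K ^ 2 * r ^ 2 / κ
          + 2 * b ^ 2 * δ i ^ 2) / (4 * κ) + b * δ i * ρ))) / N := by
      gcongr with i hi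
      exact hE i hi
    _ ≤ _ := by
      rw [sum_add_distrib]
      gcongr
      exact sum_Icc_sub_succ_div_le hN (fun n _ => hDD_nonneg n) (fun n _ => hDD_le n) ha ha_anti

end Probability

theorem mirror_descent_bound_sqrt_schedule_le {a₀ d₀ b c κ r K : ℝ} (ha₀ : 0 < a₀) (hd₀ : 0 ≤ d₀)
    (hb : 0 ≤ b) (hc : 0 ≤ c) (hκ : 0 < κ) (hr : 0 ≤ r) {N : ℕ} (hN : 1 ≤ N) :
    (r ^ 2 / 2 / (a₀ * (N : ℝ) ^ (-(1 : ℝ) / 2)) + ∑ i ∈ Icc 1 N,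
        (a₀ * (i : ℝ) ^ (-(1 : ℝ) / 2) * (c + K ^ 2 * r ^ 2 / κ + 2 * b ^ 2 * (d₀ * (i : ℝ)⁻¹) ^ 2)
          / (4 * κ) + b * (d₀ * (i : ℝ)⁻¹) * (r / √(2 * κ)))) / N ≤
      (r ^ 2 / 2 + 2 * (c / (2 * κ)) + 2 * (K ^ 2 * r ^ 2 / (2 * κ ^ 2))) * max a₀ a₀⁻¹ / √N
        + 2.5 * (b ^ 2 / κ) * d₀ ^ 2 * a₀ / N + (b * r / √(2 * κ)) * d₀ * (1 + Real.log N) / N := by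
  have hrpow : ∀ n : ℕ, (n : ℝ) ^ (-(1 : ℝ) / 2) = (√n)⁻¹ := fun n => by
    rw [neg_div, Real.rpow_neg (Nat.cast_nonneg _), Real.sqrt_eq_rpow]
  simp only [hrpow]
  set A := c / κ + K ^ 2 * r ^ 2 / κ ^ 2 with hA_def
  set M := max a₀ a₀⁻¹
  have hA : 0 ≤ A := by positivity
  have hterm : ∀ i ∈ Icc 1 N, a₀ * (√i)⁻¹ * (c + K ^ 2 * r ^ 2 / κ
        + 2 * b ^ 2 * (d₀ * (i : ℝ)⁻¹) ^ 2) / (4 * κ) + b * (d₀ * (i : ℝ)⁻¹) * (r / √(2 * κ)) ≤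
      A / 4 * a₀ * (√i)⁻¹ + a₀ * b ^ 2 * d₀ ^ 2 / (2 * κ) * ((i : ℝ) ^ 2)⁻¹
        + b * d₀ * (r / √(2 * κ)) * (i : ℝ)⁻¹ := by
    intro i hi
    have hs : (√i)⁻¹ ≤ 1 :=
      inv_le_one_of_one_le₀ (Real.one_le_sqrt.2 (by exact_mod_cast (mem_Icc.1 hi).1))
    linear_combination mul_le_mul_of_nonneg_left
      (mul_le_of_le_one_left (b := ((i : ℝ) ^ 2)⁻¹) (by positivity) hs)
      (by positivity : 0 ≤ a₀ * b ^ 2 * d₀ ^ 2 / (2 * κ))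
  have hsum := sum_le_sum hterm
  simp only [sum_add_distrib, ← mul_sum] at hsum ⊢
  have h1 := mul_le_mul_of_nonneg_left (sum_Icc_inv_sqrt_le N) (by positivity : 0 ≤ A / 4 * a₀)
  have h2 := mul_le_mul_of_nonneg_left (sum_Icc_inv_sq_le_two N)
    (by positivity : 0 ≤ a₀ * b ^ 2 * d₀ ^ 2 / (2 * κ))
  have h3 := mul_le_mul_of_nonneg_left (sum_Icc_inv_le_one_add_log N)
    (by positivity : 0 ≤ b * d₀ * (r / √(2 * κ)))
  have hM₁ : a₀ ≤ M := le_max_left _ _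
  have hM₂ : a₀⁻¹ ≤ M := le_max_right _ _
  have e1 : r ^ 2 / 2 / (a₀ * (√N)⁻¹) ≤ r ^ 2 / 2 * M * √N := by
    rw [div_mul_eq_div_div, div_inv_eq_mul, div_eq_mul_inv]
    gcongr
  have e2 : A / 4 * a₀ * (2 * √N) ≤ A * M * √N := by
    rw [show A / 4 * a₀ * (2 * √N) = A / 2 * a₀ * √N by ring]
    gcongr
    linarith
  have e3 : a₀ * b ^ 2 * d₀ ^ 2 / (2 * κ) * 2 ≤ 2.5 * (b ^ 2 / κ) * d₀ ^ 2 * a₀ := by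
    rw [show a₀ * b ^ 2 * d₀ ^ 2 / (2 * κ) * 2 = b ^ 2 / κ * d₀ ^ 2 * a₀ by field_simp]
    linarith [show 0 ≤ b ^ 2 / κ * d₀ ^ 2 * a₀ by positivity]
  calc _ ≤ ((r ^ 2 / 2 + A) * M * √N + 2.5 * (b ^ 2 / κ) * d₀ ^ 2 * a₀
        + b * d₀ * (r / √(2 * κ)) * (1 + Real.log N)) / N :=
        div_le_div_of_nonneg_right (by linarith) (Nat.cast_nonneg N)
    _ = _ := by
        rw [add_div, add_div, mul_div_assoc, Real.sqrt_div_self', hA_def]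
        ring

theorem md_corollary3a_general
    {Ω : Type*} {m0 : MeasurableSpace Ω} {μ : Measure Ω} [IsProbabilityMeasure μ]
    (ℱ : ℕ → MeasurableSpace Ω) (hℱ_le : ∀ n, ℱ n ≤ m0)
    (Θ : Set ℝ) (hΘcp : IsCompact Θ) (hΘcv : Convex ℝ Θ)
    (J J' : ℝ → ℝ) (hJconv : ConvexOn ℝ Set.univ J)
    (hJ : ∀ x, HasDerivAt J (J' x) x)
    (θstar : ℝ) (hθstar : θstar ∈ Θ)
    (ψ ψ' : ℝ → ℝ) (hψ : ∀ x, HasDerivAt ψ (ψ' x) x)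
    (κ r : ℝ) (hκ : 0 < κ) (hr : 0 < r)
    (hD_lower : ∀ x ∈ Θ, ∀ y ∈ Θ,
      κ * (x - y) ^ 2 ≤ ψ x - ψ y - ψ' y * (x - y))
    (hD_upper : ∀ x ∈ Θ, ψ θstar - ψ x - ψ' x * (θstar - x) ≤ r ^ 2 / 2)
    (K₁ K₂ : ℝ)
    (hJ'bound : ∀ x ∈ Θ, K₁ * |x - θstar| ≤ |J' x| ∧ |J' x| ≤ K₂ * |x - θstar|)
    (a₀ d₀ : ℝ) (ha₀ : 0 < a₀) (hd₀ : 0 < d₀)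
    (a δ : ℕ → ℝ)
    (ha : ∀ n : ℕ, a n = a₀ * (n : ℝ) ^ (-(1 : ℝ) / 2))
    (hδ : ∀ n : ℕ, δ n = d₀ * (n : ℝ)⁻¹)
    (b c : ℝ) (hb : 0 ≤ b) (hc : 0 ≤ c)
    (θ h Δ : ℕ → Ω → ℝ)
    (hθmeas : ∀ n, StronglyMeasurable[ℱ n] (θ n))
    (hhL2 : ∀ n, MemLp (h n) 2 μ)
    (hθΘ : ∀ n, ∀ᵐ ω ∂μ, θ n ω ∈ Θ)
    (hupdate : ∀ n : ℕ, 1 ≤ n → ∀ᵐ ω ∂μ,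
      IsMinOn (fun x : ℝ => h n ω * x +
        (ψ x - ψ (θ n ω) - ψ' (θ n ω) * (x - θ n ω)) / a n) Θ (θ (n + 1) ω))
    (hbias : ∀ n : ℕ, 1 ≤ n →
      μ[h n | ℱ n] =ᵐ[μ] fun ω => J' (θ n ω) + Δ n ω)
    (hΔ : ∀ n : ℕ, 1 ≤ n → ∀ᵐ ω ∂μ, |Δ n ω| ≤ b * δ n)
    (hvar : ∀ n : ℕ, 1 ≤ n → ∀ᵐ ω ∂μ,
      (μ[fun ω' => (h n ω' - (μ[h n | ℱ n]) ω') ^ 2 | ℱ n]) ω ≤ c) :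
    ∀ n : ℕ, 1 ≤ n →
      ∫ ω, (J ((∑ i ∈ Finset.Icc 1 n, θ i ω) / n) - J θstar) ∂μ ≤
        (r ^ 2 / 2 + 2 * (c / (2 * κ)) + 2 * (K₂ ^ 2 * r ^ 2 / (2 * κ ^ 2)))
            * max a₀ a₀⁻¹ / Real.sqrt n
        + 2.5 * (b ^ 2 / κ) * d₀ ^ 2 * a₀ / n
        + (b * r / Real.sqrt (2 * κ)) * d₀ * (1 + Real.log n) / n := by
  intro n hn
  have ha_pos : ∀ k, 1 ≤ k → 0 < a k := fun k hk => by
    rw [ha]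
    exact mul_pos ha₀ (Real.rpow_pos_of_pos (Nat.cast_pos.2 hk) _)
  have ha_anti : ∀ k, 1 ≤ k → a (k + 1) ≤ a k := fun k hk => by
    rw [ha, ha]
    exact mul_le_mul_of_nonneg_left (Real.rpow_le_rpow_of_nonpos (Nat.cast_pos.2 hk)
      (by push_cast; linarith) (by norm_num)) ha₀.le
  have hbound := integral_average_sub_le ℱ hℱ_le hΘcp hΘcv hJconv hJ hψ hκ hr.le hθstar hD_lower
    hD_upper (fun x hx => (hJ'bound x hx).2) ha_pos ha_anti hθmeas hhL2 hθΘ hupdate hbias hΔ hvar hn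
  simp only [ha, hδ] at hbound
  exact hbound.trans (mirror_descent_bound_sqrt_schedule_le ha₀ hd₀.le hb hc hκ hr.le hn)

/-- Corollary 3(a): mirror descent with one-sided finite differences
(`β = 1`), bounded conditional variance (`γ = 0`), stepsizes
`a_n = a n^{−1/2}` and widths `δ_n = d n^{−1}`. -/
theorem md_corollary3a
    {Ω : Type*} {m0 : MeasurableSpace Ω} {μ : Measure Ω} [IsProbabilityMeasure μ]
    (ℱ : ℕ → MeasurableSpace Ω) (hℱ_le : ∀ n, ℱ n ≤ m0) (hℱ_mono : Monotone ℱ)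
    (Θ : Set ℝ) (hΘne : Θ.Nonempty) (hΘcp : IsCompact Θ) (hΘcv : Convex ℝ Θ)
    (J J' : ℝ → ℝ) (hJconv : ConvexOn ℝ Set.univ J)
    (hJ : ∀ x, HasDerivAt J (J' x) x)
    (θstar : ℝ) (hθstar : θstar ∈ Θ) (hmin : ∀ x ∈ Θ, J θstar ≤ J x)
    (ψ ψ' : ℝ → ℝ) (hψ : ∀ x, HasDerivAt ψ (ψ' x) x)
    (κ r : ℝ) (hκ : 0 < κ) (hr : 0 < r)
    (hD_lower : ∀ x ∈ Θ, ∀ y ∈ Θ,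
      κ * (x - y) ^ 2 ≤ ψ x - ψ y - ψ' y * (x - y))
    (hD_upper : ∀ x ∈ Θ, ψ θstar - ψ x - ψ' x * (θstar - x) ≤ r ^ 2 / 2)
    (K₁ K₂ : ℝ) (hK₁ : 0 < K₁) (hK₁₂ : K₁ ≤ K₂)
    (hJ'bound : ∀ x ∈ Θ, K₁ * |x - θstar| ≤ |J' x| ∧ |J' x| ≤ K₂ * |x - θstar|)
    (a₀ d₀ : ℝ) (ha₀ : 0 < a₀) (hd₀ : 0 < d₀)
    (a δ : ℕ → ℝ)
    (ha : ∀ n : ℕ, a n = a₀ * (n : ℝ) ^ (-(1 : ℝ) / 2))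
    (hδ : ∀ n : ℕ, δ n = d₀ * (n : ℝ)⁻¹)
    (b c : ℝ) (hb : 0 ≤ b) (hc : 0 ≤ c)
    (θ h Δ : ℕ → Ω → ℝ)
    (hθmeas : ∀ n, StronglyMeasurable[ℱ n] (θ n))
    (hhL2 : ∀ n, MemLp (h n) 2 μ)
    (hθΘ : ∀ n, ∀ᵐ ω ∂μ, θ n ω ∈ Θ)
    (hupdate : ∀ n : ℕ, 1 ≤ n → ∀ᵐ ω ∂μ,
      IsMinOn (fun x : ℝ => h n ω * x +
        (ψ x - ψ (θ n ω) - ψ' (θ n ω) * (x - θ n ω)) / a n) Θ (θ (n + 1) ω))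
    (hbias : ∀ n : ℕ, 1 ≤ n →
      μ[h n | ℱ n] =ᵐ[μ] fun ω => J' (θ n ω) + Δ n ω)
    (hΔ : ∀ n : ℕ, 1 ≤ n → ∀ᵐ ω ∂μ, |Δ n ω| ≤ b * δ n)
    (hvar : ∀ n : ℕ, 1 ≤ n → ∀ᵐ ω ∂μ,
      (μ[fun ω' => (h n ω' - (μ[h n | ℱ n]) ω') ^ 2 | ℱ n]) ω ≤ c) :
    ∀ n : ℕ, 1 ≤ n →
      ∫ ω, (J ((∑ i ∈ Finset.Icc 1 n, θ i ω) / n) - J θstar) ∂μ ≤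
        (r ^ 2 / 2 + 2 * (c / (2 * κ)) + 2 * (K₂ ^ 2 * r ^ 2 / (2 * κ ^ 2)))
            * max a₀ a₀⁻¹ / Real.sqrt n
        + 2.5 * (b ^ 2 / κ) * d₀ ^ 2 * a₀ / n
        + (b * r / Real.sqrt (2 * κ)) * d₀ * (1 + Real.log n) / n :=
  md_corollary3a_general ℱ hℱ_le Θ hΘcp hΘcv J J' hJconv hJ θstar hθstar ψ ψ' hψ κ r hκ hr hD_lower
    hD_upper K₁ K₂ hJ'bound a₀ d₀ ha₀ hd₀ a δ ha hδ b c hb hc θ h Δ hθmeas hhL2 hθΘ hupdate hbias hΔ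
    hvar
end

section
/- (Corollary 4, achievability) Let β > 0, let C₁, …, C₅ ≥ 0, a, d > 0, and set α = (β + 2)/(2β + 2), η = 1/(2β + 2), a_i = a·i^{−α}, δ_i = d·i^{−η}. Define H(n) = C₁/(n a_n) + (C₂/n)·Σ_{i=1}^n a_i δ_i^{−2} + (C₃/n)·Σ_{i=1}^n a_i + (C₄/n)·Σ_{i=1}^n a_i δ_i^{2β} + (C₅/n)·Σ_{i=1}^n δ_i^{β}. Then there exists a constant C > 0 such that H(n) ≤ C·n^{−β/(2β+2)} for all n ≥ 1. In particular the bound decays at rate n^{−1/4} for β = 1 (one-sided differences) and n^{−1/3} for β = 2 (symmetric differences). -/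
/-!
With `r = β / (2β + 2)` the exponents are balanced: `n a_n ≍ n^r`, the summands
`a_i δ_i⁻²` and `δ_i^β` are both `≍ i^{-r}`, and `a_i`, `a_i δ_i^{2β}` decay at least as fast.
Since `0 ≤ r < 1`, Bernoulli's inequality gives `(1 - r) i^{-r} ≤ i^{1-r} - (i-1)^{1-r}`, which
telescopes to `∑_{i ≤ n} i^{-r} ≤ n^{1-r} / (1 - r)`; so every averaged sum in `H(n)` is `O(n^{-r})`.
-/

open Finset Real

theorem one_sub_mul_rpow_neg_le_rpow_sub_rpow {r x : ℝ} (hr0 : 0 ≤ r) (hr1 : r < 1)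
    (hx : 1 ≤ x) :
    (1 - r) * x ^ (-r) ≤ x ^ (1 - r) - (x - 1) ^ (1 - r) := by
  have hx0 : 0 < x := by linarith
  have hinv : -1 ≤ -x⁻¹ := by simpa using inv_le_one_of_one_le₀ hx
  have bernoulli : (1 + -x⁻¹) ^ (1 - r) ≤ 1 + (1 - r) * -x⁻¹ :=
    rpow_one_add_le_one_add_mul_self hinv (by linarith) (by linarith)
  have hfactor : (x - 1) ^ (1 - r) = x ^ (1 - r) * (1 + -x⁻¹) ^ (1 - r) := by
    rw [← mul_rpow hx0.le (by linarith)]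
    congr 1
    field_simp
    ring
  have hpow : x ^ (1 - r) * x⁻¹ = x ^ (-r) := by
    rw [← rpow_neg_one, ← rpow_add hx0]
    ring_nf
  have := mul_le_mul_of_nonneg_left bernoulli (rpow_nonneg hx0.le (1 - r))
  nlinarith [hpow, hfactor]

theorem sum_Icc_rpow_neg_le {r : ℝ} (hr0 : 0 ≤ r) (hr1 : r < 1) (n : ℕ) :
    ∑ i ∈ Icc 1 n, (i : ℝ) ^ (-r) ≤ (n : ℝ) ^ (1 - r) / (1 - r) := by
  induction n with
  | zero => simp [zero_rpow (by linarith : (1 : ℝ) - r ≠ 0)]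
  | succ n ih =>
    rw [sum_Icc_succ_top (by omega), le_div_iff₀ (by linarith)]
    have step := one_sub_mul_rpow_neg_le_rpow_sub_rpow hr0 hr1
      (by simp : (1 : ℝ) ≤ ((n + 1 : ℕ) : ℝ))
    rw [le_div_iff₀ (by linarith)] at ih
    push_cast at step ⊢
    simp only [add_sub_cancel_right] at step
    linarith

theorem div_mul_sum_Icc_rpow_neg_le {K r s : ℝ} (hK : 0 ≤ K) (hr0 : 0 ≤ r) (hr1 : r < 1)
    (hrs : r ≤ s) {n : ℕ} (hn : 1 ≤ n) :
    K / n * ∑ i ∈ Icc 1 n, (i : ℝ) ^ (-s) ≤ K / (1 - r) * (n : ℝ) ^ (-r) := by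
  have hn0 : (0 : ℝ) < n := by exact_mod_cast hn
  have hsum : ∑ i ∈ Icc 1 n, (i : ℝ) ^ (-s) ≤ n * (n : ℝ) ^ (-r) / (1 - r) := calc
    _ ≤ ∑ i ∈ Icc 1 n, (i : ℝ) ^ (-r) := sum_le_sum fun i hi =>
          rpow_le_rpow_of_exponent_le (by exact_mod_cast (mem_Icc.mp hi).1) (by linarith)
    _ ≤ (n : ℝ) ^ (1 - r) / (1 - r) := sum_Icc_rpow_neg_le hr0 hr1 n
    _ = n * (n : ℝ) ^ (-r) / (1 - r) := by
          rw [sub_eq_add_neg, rpow_add hn0, rpow_one]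
  calc K / n * ∑ i ∈ Icc 1 n, (i : ℝ) ^ (-s)
      ≤ K / n * (n * (n : ℝ) ^ (-r) / (1 - r)) := by gcongr
    _ = K / (1 - r) * (n : ℝ) ^ (-r) := by field_simp

theorem div_mul_sum_Icc_le_of_eq_mul_rpow_neg {C c r s : ℝ} (hC : 0 ≤ C) (hc : 0 ≤ c)
    (hr0 : 0 ≤ r) (hr1 : r < 1) (hrs : r ≤ s) {f : ℕ → ℝ}
    (hf : ∀ i, 1 ≤ i → f i = c * (i : ℝ) ^ (-s)) {n : ℕ} (hn : 1 ≤ n) :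
    C / n * ∑ i ∈ Icc 1 n, f i ≤ C * c / (1 - r) * (n : ℝ) ^ (-r) := calc
  _ = C * c / n * ∑ i ∈ Icc 1 n, (i : ℝ) ^ (-s) := by
        rw [sum_congr rfl fun i hi => hf i (mem_Icc.mp hi).1, ← mul_sum]
        ring
  _ ≤ _ := div_mul_sum_Icc_rpow_neg_le (by positivity) hr0 hr1 hrs hn

theorem mul_rpow_neg_rpow {d x : ℝ} (hd : 0 ≤ d) (hx : 0 ≤ x) (η p : ℝ) :
    (d * x ^ (-η)) ^ p = d ^ p * x ^ (-(η * p)) := by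
  rw [mul_rpow hd (rpow_nonneg hx _), ← rpow_mul hx, neg_mul]

theorem div_mul_mul_rpow_neg (C a : ℝ) {x : ℝ} (hx : 0 < x) (α : ℝ) :
    C / (x * (a * x ^ (-α))) = C / a * x ^ (-(1 - α)) := by
  rw [rpow_neg hx.le, rpow_neg hx.le, rpow_sub hx, rpow_one]
  field_simp

/-- Corollary 4 (achievability): with `γ = −2` (independent samples),
`α = (β+2)/(2β+2)`, `η = 1/(2β+2)`, `a_i = a i^{−α}`, `δ_i = d i^{−η}`,
the mirror descent error bound `H(n)` decays at rate `n^{−β/(2β+2)}`. -/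
theorem md_corollary4_achievability
    (β C₁ C₂ C₃ C₄ C₅ a d : ℝ) (hβ : 0 < β)
    (hC₁ : 0 ≤ C₁) (hC₂ : 0 ≤ C₂) (hC₃ : 0 ≤ C₃) (hC₄ : 0 ≤ C₄) (hC₅ : 0 ≤ C₅)
    (ha : 0 < a) (hd : 0 < d)
    (α η : ℝ) (hα : α = (β + 2) / (2 * β + 2)) (hη : η = 1 / (2 * β + 2))
    (as δs : ℕ → ℝ)
    (has : ∀ i : ℕ, as i = a * (i : ℝ) ^ (-α))
    (hδs : ∀ i : ℕ, δs i = d * (i : ℝ) ^ (-η))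
    (H : ℕ → ℝ)
    (hH : ∀ n : ℕ, H n =
      C₁ / (n * as n)
      + C₂ / n * ∑ i ∈ Finset.Icc 1 n, as i * δs i ^ (-2 : ℝ)
      + C₃ / n * ∑ i ∈ Finset.Icc 1 n, as i
      + C₄ / n * ∑ i ∈ Finset.Icc 1 n, as i * δs i ^ (2 * β)
      + C₅ / n * ∑ i ∈ Finset.Icc 1 n, δs i ^ β) :
    ∃ C : ℝ, 0 < C ∧ ∀ n : ℕ, 1 ≤ n →
      H n ≤ C * (n : ℝ) ^ (-(β / (2 * β + 2))) := by
  have hr1 : β / (2 * β + 2) < 1 := by rw [div_lt_one (by linarith)]; linarith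
  have hα' : 1 - α = β / (2 * β + 2) := by rw [hα]; field_simp; ring
  have hrα : β / (2 * β + 2) ≤ α := by rw [hα]; gcongr; linarith
  have hr2 : β / (2 * β + 2) ≤ α + η * -2 := by rw [hα, hη]; field_simp; linarith
  have hr4 : β / (2 * β + 2) ≤ α + η * (2 * β) := by rw [hα, hη]; field_simp; linarith
  have hr5 : β / (2 * β + 2) ≤ η * β := le_of_eq (by rw [hη]; ring)
  set r := β / (2 * β + 2)
  have hr0 : 0 ≤ r := by positivity
  have hδp : ∀ i, 1 ≤ i → ∀ p, δs i ^ p = d ^ p * (i : ℝ) ^ (-(η * p)) := fun i _ p => by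
    rw [hδs, mul_rpow_neg_rpow hd.le (Nat.cast_nonneg i)]
  have hasδp : ∀ i, 1 ≤ i → ∀ p, as i * δs i ^ p = a * d ^ p * (i : ℝ) ^ (-(α + η * p)) :=
    fun i hi p => by
      rw [has, hδp i hi, mul_mul_mul_comm, ← rpow_add (by exact_mod_cast hi), neg_add]
  refine ⟨C₁ / a + C₂ * (a * d ^ (-2 : ℝ)) / (1 - r) + C₃ * a / (1 - r)
      + C₄ * (a * d ^ (2 * β)) / (1 - r) + C₅ * d ^ β / (1 - r) + 1, by positivity, ?_⟩
  intro n hn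
  have h1 := div_mul_mul_rpow_neg C₁ a (by exact_mod_cast hn : (0 : ℝ) < n) α
  have h2 := div_mul_sum_Icc_le_of_eq_mul_rpow_neg hC₂ (by positivity) hr0 hr1 hr2
    (fun i hi => hasδp i hi (-2)) hn
  have h3 := div_mul_sum_Icc_le_of_eq_mul_rpow_neg hC₃ ha.le hr0 hr1 hrα (fun i _ => has i) hn
  have h4 := div_mul_sum_Icc_le_of_eq_mul_rpow_neg hC₄ (by positivity) hr0 hr1 hr4
    (fun i hi => hasδp i hi (2 * β)) hn
  have h5 := div_mul_sum_Icc_le_of_eq_mul_rpow_neg hC₅ (by positivity) hr0 hr1 hr5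
    (fun i hi => hδp i hi β) hn
  have hpos : 0 ≤ (n : ℝ) ^ (-r) := by positivity
  rw [hH, has n, h1, hα']
  linarith
end

section
/- (Key expansion for the composition method, Theorem 7) Under the composition setup, for every θ ∈ ℝ, ∫₀¹∫₀¹ (Y(θ+δ, u, v) − Y(θ−δ, u, v))² du dv = M(θ)·δ + o(δ) as δ → 0⁺, where M(θ) = 2·Σ_{i=1}^{m−1} (∫₀¹ (Q_{i+1}(v) − Q_i(v))² dv)·|ρ_i'(θ)|. Consequently, if M(θ) > 0 and L is bounded, the variance of the common-random-number finite-difference derivative estimate h = (Y(θ+δ,u,v) − Y(θ−δ,u,v))/(2δ), with (u,v) uniform on [0,1)², is of order 1/δ rather than 1/δ². -/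
/-!
Put `s_i(u) = 1[ρ_i(θ+δ) ≤ u] - 1[ρ_i(θ-δ) ≤ u]`. Summation by parts writes the common-random-number
difference of the two outputs as `Σ_{i<m} s_i(u) (Q_{i+1}(v) - Q_i(v))`; the boundary terms vanish
because `ρ_0 ≡ 0` and `ρ_m ≡ 1` do not depend on `θ`. Since the `ρ_i(θ)` are strictly increasing in
`i`, for small `δ` the intervals between `ρ_i(θ-δ)` and `ρ_i(θ+δ)` are pairwise disjoint, so the
square of the difference has no cross terms and its mean is
`Σ_i |ρ_i(θ+δ) - ρ_i(θ-δ)| ∫ (Q_{i+1} - Q_i)² = M(θ) δ + o(δ)`. The mean of the difference itself is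
`Σ_i (ρ_i(θ-δ) - ρ_i(θ+δ)) ∫ (Q_{i+1} - Q_i) = O(δ)`, so the variance of the estimate is
`O(δ)/δ² + O(1) = O(1/δ)`.
-/

open MeasureTheory Asymptotics Topology Filter Finset

noncomputable def signedIndicator (a b u : ℝ) : ℝ :=
  (Set.Ici a).indicator 1 u - (Set.Ici b).indicator 1 u

lemma signedIndicator_self (a u : ℝ) : signedIndicator a a u = 0 := sub_self _

lemma indicator_Ico_const_eq_signedIndicator_mul {a b : ℝ} (hab : a ≤ b) (c u : ℝ) :
    (Set.Ico a b).indicator (fun _ => c) u = signedIndicator a b u * c := by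
  simp only [signedIndicator, Set.indicator_apply, Set.mem_Ico, Set.mem_Ici, Pi.one_apply]
  split_ifs <;> grind

lemma signedIndicator_sq (a b u : ℝ) :
    signedIndicator a b u ^ 2 = (Set.Ico (min a b) (max a b)).indicator 1 u := by
  simp only [signedIndicator, Set.indicator_apply, Set.mem_Ico, Set.mem_Ici, Pi.one_apply,
    min_le_iff, lt_max_iff]
  split_ifs <;> grind

lemma signedIndicator_mul_eq_zero {a b c d : ℝ} (h : max a b ≤ min c d) (u : ℝ) :
    signedIndicator a b u * signedIndicator c d u = 0 := by
  simp only [max_le_iff, le_min_iff] at h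
  simp only [signedIndicator, Set.indicator_apply, Set.mem_Ici, Pi.one_apply]
  split_ifs <;> grind

lemma integrableOn_indicator_Ici_one (a : ℝ) :
    IntegrableOn ((Set.Ici a).indicator (1 : ℝ → ℝ)) (Set.Ico 0 1) :=
  (integrableOn_const measure_Ico_lt_top.ne).indicator measurableSet_Ici

lemma integrableOn_signedIndicator (a b : ℝ) :
    IntegrableOn (signedIndicator a b) (Set.Ico 0 1) :=
  (integrableOn_indicator_Ici_one a).sub (integrableOn_indicator_Ici_one b)

lemma integral_indicator_Ici_one {a : ℝ} (ha : a ∈ Set.Icc 0 1) :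
    ∫ u in Set.Ico (0 : ℝ) 1, (Set.Ici a).indicator 1 u = 1 - a := by
  have hinter : Set.Ici a ∩ Set.Ico 0 1 = Set.Ico a 1 := by
    ext u
    simp only [Set.mem_inter_iff, Set.mem_Ici, Set.mem_Ico]
    exact ⟨fun h => ⟨h.1, h.2.2⟩, fun h => ⟨h.1, ha.1.trans h.1, h.2⟩⟩
  rw [integral_indicator_one measurableSet_Ici, measureReal_restrict_apply measurableSet_Ici,
    hinter, Real.volume_real_Ico, max_eq_left (by linarith [ha.2])]

lemma integral_signedIndicator {a b : ℝ} (ha : a ∈ Set.Icc 0 1) (hb : b ∈ Set.Icc 0 1) :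
    ∫ u in Set.Ico (0 : ℝ) 1, signedIndicator a b u = b - a := by
  unfold signedIndicator
  rw [integral_sub (integrableOn_indicator_Ici_one a) (integrableOn_indicator_Ici_one b),
    integral_indicator_Ici_one ha, integral_indicator_Ici_one hb]
  ring

lemma integral_signedIndicator_sq {a b : ℝ} (ha : a ∈ Set.Icc 0 1) (hb : b ∈ Set.Icc 0 1) :
    ∫ u in Set.Ico (0 : ℝ) 1, signedIndicator a b u ^ 2 = |a - b| := by
  simp only [signedIndicator_sq]
  rw [integral_indicator_one measurableSet_Ico, measureReal_restrict_apply measurableSet_Ico,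
    Set.inter_eq_left.mpr (Set.Ico_subset_Ico (le_min ha.1 hb.1) (max_le ha.2 hb.2)),
    Real.volume_real_Ico, max_sub_min_eq_abs', max_eq_left (abs_nonneg _)]

lemma sum_Icc_sub_mul_eq_sum_Icc_mul_sub {R : Type*} [CommRing R] {n : ℕ} (s q : ℕ → R)
    (h0 : s 0 = 0) (hn : s n = 0) :
    ∑ i ∈ Icc 1 n, (s (i - 1) - s i) * q i = ∑ i ∈ Icc 1 (n - 1), s i * (q (i + 1) - q i) := by
  obtain _ | n := n
  · simp
  have key : ∀ k : ℕ, ∑ i ∈ Icc 1 (k + 1), (s (i - 1) - s i) * q i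
      = s 0 * q 1 - s (k + 1) * q (k + 1) + ∑ i ∈ Icc 1 k, s i * (q (i + 1) - q i) := by
    intro k
    induction k with
    | zero => simp [sub_mul]
    | succ k ih =>
      rw [sum_Icc_succ_top (by omega), ih, sum_Icc_succ_top (by omega), add_tsub_cancel_right]
      ring
  rw [key, h0, hn]
  simp

lemma sq_sum_eq_sum_sq_of_mul_eq_zero {ι R : Type*} [CommSemiring R] (t : Finset ι) (a : ι → R)
    (h : ∀ i ∈ t, ∀ j ∈ t, i ≠ j → a i * a j = 0) :
    (∑ i ∈ t, a i) ^ 2 = ∑ i ∈ t, a i ^ 2 := by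
  rw [sq, sum_mul_sum]
  refine sum_congr rfl fun i hi => ?_
  rw [sum_eq_single_of_mem i hi fun j hj hji => h i hi j hj hji.symm, sq]

lemma integral_integral_sum_mul {α β ι : Type*} [MeasurableSpace α] [MeasurableSpace β]
    {μ : Measure α} {ν : Measure β} (t : Finset ι) (f : ι → α → ℝ) (g : ι → β → ℝ)
    (hf : ∀ i ∈ t, Integrable (f i) μ) (hg : ∀ i ∈ t, Integrable (g i) ν) :
    ∫ u, ∫ v, ∑ i ∈ t, f i u * g i v ∂ν ∂μ = ∑ i ∈ t, (∫ u, f i u ∂μ) * ∫ v, g i v ∂ν := by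
  have inner (u : α) : ∫ v, ∑ i ∈ t, f i u * g i v ∂ν = ∑ i ∈ t, f i u * ∫ v, g i v ∂ν := by
    rw [integral_finsetSum t fun i hi => (hg i hi).const_mul _]
    simp only [integral_const_mul]
  simp only [inner]
  rw [integral_finsetSum t fun i hi => (hf i hi).mul_const _]
  simp only [integral_mul_const]

lemma sum_indicator_Ico_sub_sum_indicator_Ico {n : ℕ} {r r' : ℕ → ℝ} (q : ℕ → ℝ)
    (hr : ∀ i ∈ Icc 1 n, r (i - 1) ≤ r i) (hr' : ∀ i ∈ Icc 1 n, r' (i - 1) ≤ r' i)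
    (h0 : r 0 = r' 0) (hn : r n = r' n) (u : ℝ) :
    ∑ i ∈ Icc 1 n, (Set.Ico (r (i - 1)) (r i)).indicator (fun _ => q i) u
      - ∑ i ∈ Icc 1 n, (Set.Ico (r' (i - 1)) (r' i)).indicator (fun _ => q i) u
      = ∑ i ∈ Icc 1 (n - 1), signedIndicator (r i) (r' i) u * (q (i + 1) - q i) := by
  rw [← sum_Icc_sub_mul_eq_sum_Icc_mul_sub (fun i => signedIndicator (r i) (r' i) u) q
    (by simp only [h0, signedIndicator_self]) (by simp only [hn, signedIndicator_self]),
    ← sum_sub_distrib]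
  refine sum_congr rfl fun i hi => ?_
  rw [indicator_Ico_const_eq_signedIndicator_mul (hr i hi),
    indicator_Ico_const_eq_signedIndicator_mul (hr' i hi)]
  simp only [signedIndicator]
  ring

lemma integral_integral_sum_signedIndicator_mul {ι : Type*} (t : Finset ι) (a b : ι → ℝ)
    (g : ι → ℝ → ℝ) (ha : ∀ i ∈ t, a i ∈ Set.Icc 0 1) (hb : ∀ i ∈ t, b i ∈ Set.Icc 0 1)
    (hg : ∀ i ∈ t, IntegrableOn (g i) (Set.Ico 0 1)) :
    ∫ u in Set.Ico (0 : ℝ) 1, ∫ v in Set.Ico (0 : ℝ) 1,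
        ∑ i ∈ t, signedIndicator (a i) (b i) u * g i v
      = ∑ i ∈ t, (∫ v in Set.Ico (0 : ℝ) 1, g i v) * (b i - a i) := by
  rw [integral_integral_sum_mul t (fun i => signedIndicator (a i) (b i)) g
    (fun i _ => integrableOn_signedIndicator _ _) hg]
  exact sum_congr rfl fun i hi => by rw [integral_signedIndicator (ha i hi) (hb i hi), mul_comm]

lemma integral_integral_sq_sum_signedIndicator_mul {ι : Type*} [LinearOrder ι] (t : Finset ι)
    (a b : ι → ℝ) (g : ι → ℝ → ℝ) (ha : ∀ i ∈ t, a i ∈ Set.Icc 0 1)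
    (hb : ∀ i ∈ t, b i ∈ Set.Icc 0 1)
    (hg : ∀ i ∈ t, IntegrableOn (fun v => g i v ^ 2) (Set.Ico 0 1))
    (hord : ∀ i ∈ t, ∀ j ∈ t, i < j → max (a i) (b i) ≤ min (a j) (b j)) :
    ∫ u in Set.Ico (0 : ℝ) 1, ∫ v in Set.Ico (0 : ℝ) 1,
        (∑ i ∈ t, signedIndicator (a i) (b i) u * g i v) ^ 2
      = ∑ i ∈ t, (∫ v in Set.Ico (0 : ℝ) 1, g i v ^ 2) * |a i - b i| := by
  have hsq (u v : ℝ) : (∑ i ∈ t, signedIndicator (a i) (b i) u * g i v) ^ 2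
      = ∑ i ∈ t, signedIndicator (a i) (b i) u ^ 2 * g i v ^ 2 := by
    rw [sq_sum_eq_sum_sq_of_mul_eq_zero]
    · simp only [mul_pow]
    intro i hi j hj hij
    have hzero : signedIndicator (a i) (b i) u * signedIndicator (a j) (b j) u = 0 := by
      rcases hij.lt_or_gt with h | h
      · exact signedIndicator_mul_eq_zero (hord i hi j hj h) u
      · rw [mul_comm]; exact signedIndicator_mul_eq_zero (hord j hj i hi h) u
    linear_combination g i v * g j v * hzero
  simp only [hsq]
  rw [integral_integral_sum_mul t (fun i u => signedIndicator (a i) (b i) u ^ 2)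
    (fun i v => g i v ^ 2) (fun i _ => ?_) hg]
  · exact sum_congr rfl fun i hi => by
      rw [integral_signedIndicator_sq (ha i hi) (hb i hi), mul_comm]
  simp only [signedIndicator_sq]
  exact (integrableOn_const measure_Ico_lt_top.ne).indicator measurableSet_Ico

lemma sum_Icc_lt_sum_Icc_of_pos {m i j : ℕ} {f : ℕ → ℝ} (hf : ∀ k ∈ Icc 1 m, 0 < f k)
    (hij : i < j) (hj : j ≤ m) : ∑ k ∈ Icc 1 i, f k < ∑ k ∈ Icc 1 j, f k :=
  sum_lt_sum_of_subset (Icc_subset_Icc_right hij.le) (i := j) (by simp only [mem_Icc]; omega)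
    (by simp only [mem_Icc, not_and, not_le]; omega) (hf j (by simp only [mem_Icc]; omega))
    fun k hk _ => (hf k (Icc_subset_Icc_right hj hk)).le

lemma sum_Icc_mem_Icc_of_pos {m i : ℕ} {f : ℕ → ℝ} (hf : ∀ k ∈ Icc 1 m, 0 < f k)
    (hsum : ∑ k ∈ Icc 1 m, f k = 1) (hi : i ≤ m) : ∑ k ∈ Icc 1 i, f k ∈ Set.Icc 0 1 := by
  refine ⟨sum_nonneg fun k hk => (hf k (Icc_subset_Icc_right hi hk)).le, hsum ▸ ?_⟩
  exact sum_le_sum_of_subset_of_nonneg (Icc_subset_Icc_right hi) fun k hk _ => (hf k hk).le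

lemma eventually_max_le_min {f g : ℝ → ℝ} {x : ℝ} (hf : ContinuousAt f x)
    (hg : ContinuousAt g x) (h : f x < g x) :
    ∀ᶠ δ in 𝓝 0, max (f (x + δ)) (f (x - δ)) ≤ min (g (x + δ)) (g (x - δ)) := by
  have hplus : Tendsto (fun δ : ℝ => x + δ) (𝓝 0) (𝓝 x) := by
    simpa using tendsto_const_nhds.add (tendsto_id (x := 𝓝 (0 : ℝ)))
  have hminus : Tendsto (fun δ : ℝ => x - δ) (𝓝 0) (𝓝 x) := by
    simpa using tendsto_const_nhds.sub (tendsto_id (x := 𝓝 (0 : ℝ)))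
  have hmax := (hf.tendsto.comp hplus).max (hf.tendsto.comp hminus)
  have hmin := (hg.tendsto.comp hplus).min (hg.tendsto.comp hminus)
  rw [max_self] at hmax
  rw [min_self] at hmin
  exact (hmax.eventually_lt hmin h).mono fun _ => le_of_lt

theorem HasDerivAt.isLittleO_central_difference {f : ℝ → ℝ} {f' x : ℝ} (hf : HasDerivAt f f' x) :
    (fun δ => f (x + δ) - f (x - δ) - 2 * f' * δ) =o[𝓝 0] fun δ => δ := by
  have hplus : HasDerivAt (fun δ => f (x + δ)) f' 0 := .comp_const_add x 0 (by simpa using hf)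
  have hminus : HasDerivAt (fun δ => f (x - δ)) (-f') 0 := .comp_const_sub x 0 (by simpa using hf)
  refine (hasDerivAt_iff_isLittleO_nhds_zero.mp (hplus.sub hminus)).congr_left fun δ => ?_
  simp only [Pi.sub_apply, zero_add, add_zero, sub_zero, sub_self, smul_eq_mul]
  ring

theorem HasDerivAt.isBigO_central_difference {f : ℝ → ℝ} {f' x : ℝ} (hf : HasDerivAt f f' x) :
    (fun δ => f (x + δ) - f (x - δ)) =O[𝓝 0] fun δ => δ :=
  (hf.isLittleO_central_difference.isBigO.add
    ((isBigO_refl _ _).const_mul_left (2 * f'))).congr_left fun δ => by ring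

theorem HasDerivAt.isLittleO_abs_central_difference {f : ℝ → ℝ} {f' x : ℝ}
    (hf : HasDerivAt f f' x) :
    (fun δ => |f (x + δ) - f (x - δ)| - 2 * |f'| * δ) =o[𝓝[>] 0] fun δ => δ := by
  refine IsBigO.trans_isLittleO ?_ (hf.isLittleO_central_difference.mono nhdsWithin_le_nhds)
  refine IsBigO.of_bound 1 ?_
  filter_upwards [self_mem_nhdsWithin] with δ (hδ : 0 < δ)
  have habs : 2 * |f'| * δ = |2 * f' * δ| := by rw [abs_mul, abs_mul, abs_two, abs_of_pos hδ]
  rw [one_mul, Real.norm_eq_abs, Real.norm_eq_abs, habs]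
  exact abs_abs_sub_abs_le_abs_sub _ _

lemma eventually_forall_max_le_min {ι : Type*} [LT ι] (t : Finset ι) {r : ι → ℝ → ℝ} {x : ℝ}
    (hr : ∀ i ∈ t, ContinuousAt (r i) x) (hlt : ∀ i ∈ t, ∀ j ∈ t, i < j → r i x < r j x) :
    ∀ᶠ δ in 𝓝 0, ∀ i ∈ t, ∀ j ∈ t, i < j →
      max (r i (x + δ)) (r i (x - δ)) ≤ min (r j (x + δ)) (r j (x - δ)) := by
  simp only [eventually_all_finset, eventually_imp_distrib_left]
  exact fun i hi j hj hij => eventually_max_le_min (hr i hi) (hr j hj) (hlt i hi j hj hij)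

lemma isLittleO_sum_mul_abs_central_difference {ι : Type*} (t : Finset ι) (c : ι → ℝ)
    {r : ι → ℝ → ℝ} {x : ℝ} (hr : ∀ i ∈ t, DifferentiableAt ℝ (r i) x) :
    (fun δ => ∑ i ∈ t, c i * |r i (x + δ) - r i (x - δ)|
      - 2 * (∑ i ∈ t, c i * |deriv (r i) x|) * δ) =o[𝓝[>] 0] fun δ => δ := by
  refine (IsLittleO.sum fun i hi => (hr i hi).hasDerivAt.isLittleO_abs_central_difference
    |>.const_mul_left (c i)).congr_left fun δ => ?_
  rw [Finset.sum_apply, mul_sum, sum_mul, ← sum_sub_distrib]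
  exact sum_congr rfl fun i _ => by ring

lemma isBigO_sum_mul_central_difference {ι : Type*} (t : Finset ι) (c : ι → ℝ)
    {r : ι → ℝ → ℝ} {x : ℝ} (hr : ∀ i ∈ t, DifferentiableAt ℝ (r i) x) :
    (fun δ => ∑ i ∈ t, c i * (r i (x - δ) - r i (x + δ))) =O[𝓝 0] fun δ => δ := by
  refine (IsBigO.sum fun i hi => (hr i hi).hasDerivAt.isBigO_central_difference.neg_left
    |>.const_mul_left (c i)).congr_left fun δ => ?_
  rw [Finset.sum_apply]
  exact sum_congr rfl fun i _ => by ring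

lemma isBigO_div_sq_sub_sq_div {F G : ℝ → ℝ} (hF : F =O[𝓝[>] 0] fun δ => δ)
    (hG : G =O[𝓝[>] 0] fun δ => δ) :
    (fun δ => F δ / (4 * δ ^ 2) - (G δ / (2 * δ)) ^ 2) =O[𝓝[>] 0] fun δ => 1 / δ := by
  obtain ⟨c, hc⟩ := hF.bound
  obtain ⟨d, hd⟩ := hG.bound
  refine IsBigO.of_bound (|c| / 4 + d ^ 2 / 4) ?_
  filter_upwards [hc, hd, Ioo_mem_nhdsGT one_pos] with δ hFδ hGδ ⟨hδ0, hδ1⟩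
  simp only [Real.norm_eq_abs, abs_of_pos hδ0] at hFδ hGδ ⊢
  rw [abs_of_pos (one_div_pos.mpr hδ0)]
  have hFbound : |F δ / (4 * δ ^ 2)| ≤ |c| / 4 * (1 / δ) := by
    rw [abs_div, abs_of_pos (by positivity : (0 : ℝ) < 4 * δ ^ 2), div_le_iff₀ (by positivity)]
    calc |F δ| ≤ |c| * δ := hFδ.trans (by gcongr; exact le_abs_self c)
      _ = |c| / 4 * (1 / δ) * (4 * δ ^ 2) := by field_simp
  have hGbound : (G δ / (2 * δ)) ^ 2 ≤ d ^ 2 / 4 * (1 / δ) := by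
    rw [div_pow, div_le_iff₀ (by positivity)]
    calc G δ ^ 2 = |G δ| ^ 2 := (sq_abs _).symm
      _ ≤ (d * δ) ^ 2 := pow_le_pow_left₀ (abs_nonneg _) hGδ 2
      _ ≤ d ^ 2 / 4 * (1 / δ) * (2 * δ) ^ 2 := by
        field_simp
        nlinarith [sq_nonneg d, mul_nonneg (sq_nonneg d) hδ0.le]
  calc |F δ / (4 * δ ^ 2) - (G δ / (2 * δ)) ^ 2|
      ≤ |F δ / (4 * δ ^ 2)| + |(G δ / (2 * δ)) ^ 2| := abs_sub _ _
    _ ≤ (|c| / 4 + d ^ 2 / 4) * (1 / δ) := by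
      rw [abs_of_nonneg (sq_nonneg (G δ / (2 * δ)))]
      linarith

theorem composition_method_expansion_general
    (m : ℕ)
    (p : ℕ → ℝ → ℝ)
    (hp_pos : ∀ i ∈ Finset.Icc 1 m, ∀ x : ℝ, 0 < p i x)
    (hp_diff : ∀ i ∈ Finset.Icc 1 m, Differentiable ℝ (p i))
    (hp_sum : ∀ x : ℝ, ∑ i ∈ Finset.Icc 1 m, p i x = 1)
    (ρ : ℕ → ℝ → ℝ) (hρ : ∀ i x, ρ i x = ∑ j ∈ Finset.Icc 1 i, p j x)
    (Q : ℕ → ℝ → ℝ) (hQmeas : ∀ i, Measurable (Q i))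
    (Cq : ℝ) (hQbdd : ∀ i ∈ Finset.Icc 1 m, ∀ v : ℝ, |Q i v| ≤ Cq)
    (Y : ℝ → ℝ → ℝ → ℝ)
    (hY : ∀ x u v, Y x u v = ∑ i ∈ Finset.Icc 1 m,
      Set.indicator (Set.Ico (ρ (i - 1) x) (ρ i x)) (fun _ => Q i v) u)
    (M : ℝ → ℝ)
    (hM : ∀ x, M x = 2 * ∑ i ∈ Finset.Icc 1 (m - 1),
      (∫ v in Set.Ico (0 : ℝ) 1, (Q (i + 1) v - Q i v) ^ 2) * |deriv (ρ i) x|)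
    (θ : ℝ) :
    ((fun δ : ℝ =>
        (∫ u in Set.Ico (0 : ℝ) 1, ∫ v in Set.Ico (0 : ℝ) 1,
          (Y (θ + δ) u v - Y (θ - δ) u v) ^ 2) - M θ * δ)
      =o[nhdsWithin 0 (Set.Ioi 0)] fun δ => δ) ∧
    (0 < M θ →
      (fun δ : ℝ =>
          (∫ u in Set.Ico (0 : ℝ) 1, ∫ v in Set.Ico (0 : ℝ) 1,
            (Y (θ + δ) u v - Y (θ - δ) u v) ^ 2) / (4 * δ ^ 2)
          - (∫ u in Set.Ico (0 : ℝ) 1, ∫ v in Set.Ico (0 : ℝ) 1,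
              (Y (θ + δ) u v - Y (θ - δ) u v) / (2 * δ)) ^ 2)
        =O[nhdsWithin 0 (Set.Ioi 0)] fun δ => 1 / δ) := by
  have hρ_lt (x : ℝ) {i j : ℕ} (hij : i < j) (hj : j ≤ m) : ρ i x < ρ j x := by
    simpa only [hρ] using sum_Icc_lt_sum_Icc_of_pos (fun k hk => hp_pos k hk x) hij hj
  have hρ_mem (x : ℝ) {i : ℕ} (hi : i ≤ m) : ρ i x ∈ Set.Icc 0 1 := by
    simpa only [hρ] using sum_Icc_mem_Icc_of_pos (fun k hk => hp_pos k hk x) (hp_sum x) hi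
  have hρ_diff {i : ℕ} (hi : i ≤ m) : DifferentiableAt ℝ (ρ i) θ := by
    rw [show ρ i = fun x => ∑ j ∈ Icc 1 i, p j x from funext (hρ i)]
    exact (Differentiable.fun_sum fun j hj => hp_diff j (Icc_subset_Icc_right hi hj)) θ
  have hidx {i : ℕ} (hi : i ∈ Icc 1 (m - 1)) : i ≤ m ∧ i ∈ Icc 1 m ∧ i + 1 ∈ Icc 1 m := by
    simp only [mem_Icc] at hi ⊢; omega
  have hD (δ u v : ℝ) : Y (θ + δ) u v - Y (θ - δ) u v = ∑ i ∈ Icc 1 (m - 1),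
      signedIndicator (ρ i (θ + δ)) (ρ i (θ - δ)) u * (Q (i + 1) v - Q i v) := by
    rw [hY, hY]
    refine sum_indicator_Ico_sub_sum_indicator_Ico (r := fun i => ρ i (θ + δ))
      (r' := fun i => ρ i (θ - δ)) _ (fun i hi => ?_) (fun i hi => ?_)
      (by simp [hρ]) (by simp only [hρ, hp_sum]) u <;>
    · simp only [mem_Icc] at hi
      exact (hρ_lt _ (by omega) hi.2).le
  have hΔQ {i : ℕ} (hi : i ∈ Icc 1 (m - 1)) :
      MemLp (fun v => Q (i + 1) v - Q i v) 2 (volume.restrict (Set.Ico 0 1)) := by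
    have hQ {k : ℕ} (hk : k ∈ Icc 1 m) : MemLp (Q k) ⊤ (volume.restrict (Set.Ico 0 1)) :=
      memLp_top_of_bound (hQmeas k).aestronglyMeasurable Cq (ae_of_all _ (hQbdd k hk))
    exact ((hQ (hidx hi).2.2).sub (hQ (hidx hi).2.1)).mono_exponent le_top
  simp only [hD, integral_div]
  have hexpansion : (fun δ => (∫ u in Set.Ico (0 : ℝ) 1, ∫ v in Set.Ico (0 : ℝ) 1,
      (∑ i ∈ Icc 1 (m - 1), signedIndicator (ρ i (θ + δ)) (ρ i (θ - δ)) u *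
        (Q (i + 1) v - Q i v)) ^ 2) - M θ * δ) =o[𝓝[>] 0] fun δ => δ := by
    refine (isLittleO_sum_mul_abs_central_difference _
      (fun i => ∫ v in Set.Ico (0 : ℝ) 1, (Q (i + 1) v - Q i v) ^ 2)
      fun i hi => hρ_diff (hidx hi).1).congr' ?_ EventuallyEq.rfl
    have hsep := eventually_forall_max_le_min (Icc 1 (m - 1))
      (fun i hi => (hρ_diff (hidx hi).1).continuousAt) fun i _ j hj hij => hρ_lt θ hij (hidx hj).1
    filter_upwards [hsep.filter_mono nhdsWithin_le_nhds] with δ hδ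
    rw [integral_integral_sq_sum_signedIndicator_mul _ _ _ _ (fun i hi => hρ_mem _ (hidx hi).1)
      (fun i hi => hρ_mem _ (hidx hi).1) (fun i hi => (hΔQ hi).integrable_sq) hδ, hM]
  refine ⟨hexpansion, fun _ => isBigO_div_sq_sub_sq_div ?_ ?_⟩
  · exact (hexpansion.isBigO.add ((isBigO_refl _ _).const_mul_left (M θ))).congr_left
      fun δ => by ring
  · refine ((isBigO_sum_mul_central_difference _
      (fun i => ∫ v in Set.Ico (0 : ℝ) 1, (Q (i + 1) v - Q i v))
      fun i hi => hρ_diff (hidx hi).1).mono nhdsWithin_le_nhds).congr_left fun δ => ?_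
    exact (integral_integral_sum_signedIndicator_mul _ _ _ _ (fun i hi => hρ_mem _ (hidx hi).1)
      (fun i hi => hρ_mem _ (hidx hi).1) fun i hi => (hΔQ hi).integrable one_le_two).symm

/-- Key expansion for the composition method (Theorem 7): with common random
numbers `(u, v)` uniform on `[0,1)²`, the mean squared difference of the
composition-method outputs at `θ ± δ` expands as `M(θ)·δ + o(δ)` as
`δ → 0⁺`; consequently, if `M(θ) > 0`, the variance of the
finite-difference derivative estimate is of order `1/δ`. -/
theorem composition_method_expansion
    (m : ℕ) (hm : 2 ≤ m)
    (p : ℕ → ℝ → ℝ)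
    (hp_pos : ∀ i ∈ Finset.Icc 1 m, ∀ x : ℝ, 0 < p i x)
    (hp_diff : ∀ i ∈ Finset.Icc 1 m, Differentiable ℝ (p i))
    (hp_sum : ∀ x : ℝ, ∑ i ∈ Finset.Icc 1 m, p i x = 1)
    (ρ : ℕ → ℝ → ℝ) (hρ : ∀ i x, ρ i x = ∑ j ∈ Finset.Icc 1 i, p j x)
    (Q : ℕ → ℝ → ℝ) (hQmeas : ∀ i, Measurable (Q i))
    (Cq : ℝ) (hQbdd : ∀ i ∈ Finset.Icc 1 m, ∀ v : ℝ, |Q i v| ≤ Cq)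
    (Y : ℝ → ℝ → ℝ → ℝ)
    (hY : ∀ x u v, Y x u v = ∑ i ∈ Finset.Icc 1 m,
      Set.indicator (Set.Ico (ρ (i - 1) x) (ρ i x)) (fun _ => Q i v) u)
    (M : ℝ → ℝ)
    (hM : ∀ x, M x = 2 * ∑ i ∈ Finset.Icc 1 (m - 1),
      (∫ v in Set.Ico (0 : ℝ) 1, (Q (i + 1) v - Q i v) ^ 2) * |deriv (ρ i) x|)
    (θ : ℝ) :
    ((fun δ : ℝ =>
        (∫ u in Set.Ico (0 : ℝ) 1, ∫ v in Set.Ico (0 : ℝ) 1,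
          (Y (θ + δ) u v - Y (θ - δ) u v) ^ 2) - M θ * δ)
      =o[nhdsWithin 0 (Set.Ioi 0)] fun δ => δ) ∧
    (0 < M θ →
      (fun δ : ℝ =>
          (∫ u in Set.Ico (0 : ℝ) 1, ∫ v in Set.Ico (0 : ℝ) 1,
            (Y (θ + δ) u v - Y (θ - δ) u v) ^ 2) / (4 * δ ^ 2)
          - (∫ u in Set.Ico (0 : ℝ) 1, ∫ v in Set.Ico (0 : ℝ) 1,
              (Y (θ + δ) u v - Y (θ - δ) u v) / (2 * δ)) ^ 2)
        =O[nhdsWithin 0 (Set.Ioi 0)] fun δ => 1 / δ) :=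
  composition_method_expansion_general m p hp_pos hp_diff hp_sum ρ hρ Q hQmeas Cq hQbdd Y hY M hM θ
end
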